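/- arXiv:2307.09722 — 3 statements merged into one kernel-verified Lean document; each statement's English description precedes it below -/
import Mathlib

section
/- Suppose g : ℝⁿ → ℝⁿ is continuously differentiable on the closed ball B_r(0) of radius r > 0 centered at the origin, and set δ = ‖g(0)‖. Let L be an invertible n×n real matrix with γ = ‖L⁻¹‖, and suppose that for some ε > 0 one has ‖∇g(θ) − L‖ ≤ ε for all θ ∈ B_r(0). If εγ < 1 and δ ≤ r(1 − γε)/γ, then there exists a unique θ ∈ B_r(0) such that g(θ) = 0, and moreover ‖θ‖ ≤ δγ/(1 − εγ). -/
open Set Metric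

/-!
Subtracting the linear part, `g - L` is `ε`-Lipschitz on the ball by the mean value inequality,
so `g` approximates the linear equivalence `L` there. The quantitative surjectivity estimate
behind the inverse function theorem (a contraction argument for `θ ↦ θ - L⁻¹ g θ`) then puts `0`
in the image of the ball, and the estimate `(1 - ‖L⁻¹‖ ε) ‖x - y‖ ≤ ‖L⁻¹‖ ‖g x - g y‖` gives
both uniqueness and the bound on the zero.
-/

section ApproximatesLinearOn

variable {𝕜 E F : Type*} [NontriviallyNormedField 𝕜] [NormedAddCommGroup E] [NormedSpace 𝕜 E]
  [NormedAddCommGroup F] [NormedSpace 𝕜 F] {f : E → F} {f' : E ≃L[𝕜] F} {c : NNReal}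

theorem Convex.approximatesLinearOn_of_norm_fderivWithin_sub_le [IsRCLikeNormedField 𝕜]
    [NormedSpace ℝ E] {s : Set E}
    (hs : Convex ℝ s) (hf : DifferentiableOn 𝕜 f s)
    (bound : ∀ x ∈ s, ‖fderivWithin 𝕜 f s x - (f' : E →L[𝕜] F)‖ ≤ c) :
    ApproximatesLinearOn f (f' : E →L[𝕜] F) s c :=
  fun _ hx _ hy => hs.norm_image_sub_le_of_norm_fderivWithin_le' hf bound hy hx

theorem ApproximatesLinearOn.one_sub_mul_norm_sub_le {s : Set E}
    (hf : ApproximatesLinearOn f (f' : E →L[𝕜] F) s c) {x y : E} (hx : x ∈ s) (hy : y ∈ s) :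
    (1 - c * ‖(f'.symm : F →L[𝕜] E)‖) * ‖x - y‖ ≤
      ‖(f'.symm : F →L[𝕜] E)‖ * ‖f x - f y‖ := by
  have hlin : ‖f' (x - y)‖ ≤ ‖f x - f y‖ + c * ‖x - y‖ :=
    (norm_le_norm_add_norm_sub (f x - f y) _).trans (by gcongr; exact hf x hx y hy)
  have hinv : ‖x - y‖ ≤ ‖(f'.symm : F →L[𝕜] E)‖ * ‖f' (x - y)‖ := by
    simpa using (f'.symm : F →L[𝕜] E).le_opNorm (f' (x - y))
  nlinarith [norm_nonneg (f'.symm : F →L[𝕜] E)]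

theorem ApproximatesLinearOn.exists_mem_closedBall_eq_zero [CompleteSpace E] {x₀ : E} {r : ℝ}
    (hf : ApproximatesLinearOn f (f' : E →L[𝕜] F) (closedBall x₀ r) c) (hr : 0 ≤ r)
    (h0 : ‖f x₀‖ ≤ r * (1 - ‖(f'.symm : F →L[𝕜] E)‖ * c) / ‖(f'.symm : F →L[𝕜] E)‖) :
    ∃ θ ∈ closedBall x₀ r, f θ = 0 := by
  rcases (norm_nonneg (f'.symm : F →L[𝕜] E)).eq_or_lt with hN | hN
  · -- `‖f'⁻¹‖ = 0` only for trivial spaces; then `h0` reads `‖f x₀‖ ≤ 0` since `x / 0 = 0`.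
    rw [← hN, div_zero] at h0
    exact ⟨x₀, mem_closedBall_self hr, norm_le_zero_iff.1 h0⟩
  · refine hf.surjOn_closedBall_of_nonlinearRightInverse f'.toNonlinearRightInverse hr
      subset_rfl ?_
    rw [mem_closedBall, dist_comm, dist_zero_right]
    convert h0 using 1
    simp only [ContinuousLinearEquiv.toNonlinearRightInverse, coe_nnnorm]
    field_simp

theorem ApproximatesLinearOn.existsUnique_zero_mem_closedBall [CompleteSpace E] {x₀ : E} {r : ℝ}
    (hf : ApproximatesLinearOn f (f' : E →L[𝕜] F) (closedBall x₀ r) c) (hr : 0 ≤ r)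
    (hc : c * ‖(f'.symm : F →L[𝕜] E)‖ < 1)
    (h0 : ‖f x₀‖ ≤ r * (1 - ‖(f'.symm : F →L[𝕜] E)‖ * c) / ‖(f'.symm : F →L[𝕜] E)‖) :
    ∃ θ ∈ closedBall x₀ r, f θ = 0 ∧
      ‖θ - x₀‖ ≤ ‖f x₀‖ * ‖(f'.symm : F →L[𝕜] E)‖ / (1 - c * ‖(f'.symm : F →L[𝕜] E)‖) ∧
      ∀ θ' ∈ closedBall x₀ r, f θ' = 0 → θ' = θ := by
  obtain ⟨θ, hθ, hfθ⟩ := hf.exists_mem_closedBall_eq_zero hr h0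
  refine ⟨θ, hθ, hfθ, ?_, fun θ' hθ' hfθ' => ?_⟩
  · have := hf.one_sub_mul_norm_sub_le hθ (mem_closedBall_self hr)
    rw [hfθ, zero_sub, norm_neg] at this
    rw [le_div_iff₀ (by linarith)]
    linarith
  · have := hf.one_sub_mul_norm_sub_le hθ' hθ
    rw [hfθ, hfθ', sub_self, norm_zero, mul_zero] at this
    exact sub_eq_zero.1 (norm_le_zero_iff.1 (nonpos_of_mul_nonpos_right this (by linarith)))

end ApproximatesLinearOn

noncomputable def Matrix.mulVecContinuousLinearEquiv {n 𝕜 : Type*} [Fintype n] [DecidableEq n]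
    [NontriviallyNormedField 𝕜] [CompleteSpace 𝕜] (L : Matrix n n 𝕜) (hL : IsUnit L) :
    (n → 𝕜) ≃L[𝕜] (n → 𝕜) :=
  have hdet := (Matrix.isUnit_iff_isUnit_det L).1 hL
  .equivOfInverse (LinearMap.toContinuousLinearMap L.mulVecLin)
    (LinearMap.toContinuousLinearMap L⁻¹.mulVecLin)
    (fun v => by simp [Matrix.mulVec_mulVec, Matrix.nonsing_inv_mul L hdet])
    (fun v => by simp [Matrix.mulVec_mulVec, Matrix.mul_nonsing_inv L hdet])

theorem switch_point_existence_result_general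
    {n : ℕ}
    (g : (Fin n → ℝ) → Fin n → ℝ) (r : ℝ) (hr : 0 < r)
    (hg : ContDiffOn ℝ 1 g (closedBall (0 : Fin n → ℝ) r))
    (L : Matrix (Fin n) (Fin n) ℝ) (hL : IsUnit L)
    (γ : ℝ)
    (hγ : γ = ‖LinearMap.toContinuousLinearMap (Matrix.mulVecLin L⁻¹)‖)
    (δ : ℝ) (hδ : δ = ‖g 0‖)
    (ε : ℝ) (hε : 0 < ε)
    (hder : ∀ θ ∈ closedBall (0 : Fin n → ℝ) r,
      ‖fderivWithin ℝ g (closedBall (0 : Fin n → ℝ) r) θ -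
        LinearMap.toContinuousLinearMap (Matrix.mulVecLin L)‖ ≤ ε)
    (h1 : ε * γ < 1) (h2 : δ ≤ r * (1 - γ * ε) / γ) :
    ∃ θ ∈ closedBall (0 : Fin n → ℝ) r,
      g θ = 0 ∧ ‖θ‖ ≤ δ * γ / (1 - ε * γ) ∧
      ∀ θ' ∈ closedBall (0 : Fin n → ℝ) r, g θ' = 0 → θ' = θ := by
  subst hγ hδ
  have happrox : ApproximatesLinearOn g
      (L.mulVecContinuousLinearEquiv hL : (Fin n → ℝ) →L[ℝ] Fin n → ℝ)
      (closedBall 0 r) ⟨ε, hε.le⟩ :=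
    (convex_closedBall (0 : Fin n → ℝ) r).approximatesLinearOn_of_norm_fderivWithin_sub_le
      (hg.differentiableOn one_ne_zero) hder
  have h := happrox.existsUnique_zero_mem_closedBall hr.le h1 h2
  simp only [sub_zero] at h
  exact h

/-- Proposition 2.1, special case of Dontchev's theorem.
If `g : ℝⁿ → ℝⁿ` is continuously differentiable on the closed ball of radius `r > 0`
about the origin, `δ = ‖g 0‖`, `L` is an invertible `n × n` matrix with
`γ = ‖L⁻¹‖` (operator norm), `‖∇g θ - L‖ ≤ ε` on the ball, `ε γ < 1` and
`δ ≤ r (1 - γ ε)/γ`, then there is a unique `θ` in the ball with `g θ = 0`,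
and moreover `‖θ‖ ≤ δ γ / (1 - ε γ)`. -/
theorem switch_point_existence_result
    {n : ℕ} (hn : 0 < n)
    (g : (Fin n → ℝ) → Fin n → ℝ) (r : ℝ) (hr : 0 < r)
    (hg : ContDiffOn ℝ 1 g (closedBall (0 : Fin n → ℝ) r))
    (L : Matrix (Fin n) (Fin n) ℝ) (hL : IsUnit L)
    (γ : ℝ)
    (hγ : γ = ‖LinearMap.toContinuousLinearMap (Matrix.mulVecLin L⁻¹)‖)
    (δ : ℝ) (hδ : δ = ‖g 0‖)
    (ε : ℝ) (hε : 0 < ε)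
    (hder : ∀ θ ∈ closedBall (0 : Fin n → ℝ) r,
      ‖fderivWithin ℝ g (closedBall (0 : Fin n → ℝ) r) θ -
        LinearMap.toContinuousLinearMap (Matrix.mulVecLin L)‖ ≤ ε)
    (h1 : ε * γ < 1) (h2 : δ ≤ r * (1 - γ * ε) / γ) :
    ∃ θ ∈ closedBall (0 : Fin n → ℝ) r,
      g θ = 0 ∧ ‖θ‖ ≤ δ * γ / (1 - ε * γ) ∧
      ∀ θ' ∈ closedBall (0 : Fin n → ℝ) r, g θ' = 0 → θ' = θ :=
  switch_point_existence_result_general g r hr hg L hL γ hγ δ hδ ε hε hder h1 h2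
end

section
/- Assume Dynamics Smoothness holds, the objective C : ℝⁿ → ℝ is continuously differentiable, and both Φ_{EJ}(T) and Ψ_{FI}(T) are invertible. For each sufficiently small Δs, let x⁺ denote a solution of the boundary-value problem with the switch point perturbed to s + Δs (which exists by the stability of solutions with respect to the switch point) chosen so that ‖x⁺_J(0) − x_J(0)‖ ≤ c|Δs| for a constant c independent of Δs. Then the limit lim_{Δs → 0} (C(x⁺(T)) − C(x(T)))/Δs exists and equals H₀(x(s), p(s), s) − H₁(x(s), p(s), s) = p(s)·[F₀(x(s),s) − F₁(x(s),s)], where H_j(x, p, t) = p·F_j(x,t) and p : [0,T] → ℝⁿ is the row-vector costate solving ṗ(t) = −p(t)∇ₓF(x(t),t) for t ≠ s, with p_F(T) = ∇_F C(x(T)) and p_J(0) = 0. -/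
open Set Metric Filter Topology

/-- **Dynamics Smoothness** for a dynamics `Fd` with spatial Jacobian `DFd`, on the tube
`{(χ,t) : t ∈ [a,b], ‖χ - x t‖ ≤ ρ}` around the trajectory `x` :
`Fd` is continuously differentiable on the tube, and `χ ↦ DFd χ t` is Lipschitz
with constant `L`, uniformly in `t`. -/
structure DynSmooth (n : ℕ) (Fd : (Fin n → ℝ) → ℝ → Fin n → ℝ)
    (DFd : (Fin n → ℝ) → ℝ → (Fin n → ℝ) →L[ℝ] (Fin n → ℝ))
    (x : ℝ → Fin n → ℝ) (a b ρ L : ℝ) : Prop where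
  contDiffOn : ContDiffOn ℝ 1 (fun p : (Fin n → ℝ) × ℝ => Fd p.1 p.2)
    {p : (Fin n → ℝ) × ℝ | p.2 ∈ Icc a b ∧ ‖p.1 - x p.2‖ ≤ ρ}
  hasFDeriv : ∀ χ t, t ∈ Icc a b → ‖χ - x t‖ ≤ ρ →
    HasFDerivAt (fun y => Fd y t) (DFd χ t) χ
  contDeriv : ContinuousOn (fun p : (Fin n → ℝ) × ℝ => DFd p.1 p.2)
    {p : (Fin n → ℝ) × ℝ | p.2 ∈ Icc a b ∧ ‖p.1 - x p.2‖ ≤ ρ}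
  lip : ∀ t χ₁ χ₂, t ∈ Icc a b → ‖χ₁ - x t‖ ≤ ρ → ‖χ₂ - x t‖ ≤ ρ →
    ‖DFd χ₁ t - DFd χ₂ t‖ ≤ L * ‖χ₁ - χ₂‖

/-- `y` is a solution of the boundary-value problem with switched dynamics, where the
switch from `F₀` to `F₁` occurs at time `σ`: `ẏ = F₀(y,t)` on `[0,σ)`, `ẏ = F₁(y,t)` on
`(σ,T]`, with boundary conditions `y_I(0) = b_I` and `y_E(T) = b_E`. -/
def IsSwitchSol {n : ℕ} (T σ : ℝ) (I E : Finset (Fin n)) (bI bE : Fin n → ℝ)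
    (F₀ F₁ : (Fin n → ℝ) → ℝ → Fin n → ℝ) (y : ℝ → Fin n → ℝ) : Prop :=
  ContinuousOn y (Icc 0 T) ∧
  (∀ t ∈ Ico 0 σ, HasDerivWithinAt y (F₀ (y t) t) (Icc 0 T) t) ∧
  (∀ t ∈ Ioc σ T, HasDerivWithinAt y (F₁ (y t) t) (Icc 0 T) t) ∧
  (∀ i ∈ I, y 0 i = bI i) ∧
  (∀ i ∈ E, y T i = bE i)

/-- The Jacobian matrix `∇ₓF(x(t),t)` of the switched dynamics along the trajectory `x`,
represented as a matrix: `DF₀` before the switch point `s`, `DF₁` after. -/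
noncomputable def jacMat {n : ℕ}
    (DF₀ DF₁ : (Fin n → ℝ) → ℝ → (Fin n → ℝ) →L[ℝ] (Fin n → ℝ))
    (x : ℝ → Fin n → ℝ) (s t : ℝ) : Matrix (Fin n) (Fin n) ℝ :=
  LinearMap.toMatrix'
    (((if t < s then DF₀ (x t) t else DF₁ (x t) t) : (Fin n → ℝ) →L[ℝ] Fin n → ℝ) :
      (Fin n → ℝ) →ₗ[ℝ] Fin n → ℝ)


/-!
Compare the perturbed trajectory `x⁺` with `x` through the pairing `g(t) = p(t) ⬝ (x⁺(t) - x(t))`.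
The costate equation cancels the linear part of the dynamics, so
`g' = p ⬝ (F⁺(x⁺) - F(x) - ∇ₓF(x) (x⁺ - x))`. Where both trajectories follow the same field this
is a Taylor remainder, of size `O(‖x⁺ - x‖²) = O(Δs²)`; between `s` and `s + Δs` it equals
`±(H₀ - H₁)(x(s), p(s), s) + o(1)`. The boundary conditions give `g(0) = 0` and
`g(T) = ∇C(x(T)) (x⁺(T) - x(T))`, so integrating `g'` over `[0, T]` yields
`C(x⁺(T)) - C(x(T)) = Δs (H₀ - H₁) + o(Δs)`.

Everything rests on the stability bound `‖x⁺ - x‖ = O(|Δs|)`: Grönwall's inequality on the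
intervals where both trajectories follow the same field, and the bound `‖F₀‖, ‖F₁‖ ≤ B` on the
interval between the two switch times, as long as `x⁺` stays in the tube around `x` where these
bounds hold; a continuity argument shows that it never leaves it.
-/

open Matrix Real

theorem continuous_gronwallBound (K ε : ℝ) :
    Continuous fun q : ℝ × ℝ => gronwallBound q.1 K ε q.2 := by
  by_cases hK : K = 0
  · simp only [gronwallBound_K0, hK]
    fun_prop
  · simp only [gronwallBound_of_K_ne_0 hK]
    fun_prop

theorem ContinuousOn.forall_lt_of_forall_Ico_lt {u : ℝ → ℝ} {a b r : ℝ}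
    (hu : ContinuousOn u (Icc a b)) (h : ∀ t ∈ Icc a b, (∀ τ ∈ Ico a t, u τ < r) → u t < r) :
    ∀ t ∈ Icc a b, u t < r := by
  by_contra! hbad
  have hcompact : IsCompact (Icc a b ∩ u ⁻¹' Ici r) :=
    isCompact_Icc.of_isClosed_subset (hu.preimage_isClosed_of_isClosed isClosed_Icc isClosed_Ici)
      inter_subset_left
  obtain ⟨t₀, ⟨ht₀, hrt₀⟩, hleast⟩ := hcompact.exists_isLeast hbad
  refine (h t₀ ht₀ fun τ hτ => ?_).not_ge hrt₀
  by_contra! hrτ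
  exact (hleast ⟨⟨hτ.1, hτ.2.le.trans ht₀.2⟩, hrτ⟩).not_gt hτ.2

theorem eventually_mul_abs_lt (c : ℝ) {ε : ℝ} (hε : 0 < ε) : ∀ᶠ δ in 𝓝 (0 : ℝ), c * |δ| < ε :=
  ((continuous_const.mul continuous_abs).tendsto' 0 0 (by simp)).eventually (Iio_mem_nhds hε)

theorem tendsto_div_of_isLittleO {f : ℝ → ℝ} {v : ℝ}
    (h : (fun δ => f δ - δ * v) =o[𝓝[≠] 0] fun δ => δ) :
    Tendsto (fun δ => f δ / δ) (𝓝[≠] 0) (𝓝 v) := by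
  have hlim := h.tendsto_div_nhds_zero.add_const v
  rw [zero_add] at hlim
  refine hlim.congr' ?_
  filter_upwards [self_mem_nhdsWithin] with δ (hδ : δ ≠ 0)
  field_simp
  ring

section Comparison

variable {E : Type*} [NormedAddCommGroup E] [NormedSpace ℝ E]

theorem norm_le_gronwallBound_of_norm_deriv_le_Ioo {f f' : ℝ → E} {K ε a b : ℝ}
    (hf : ContinuousOn f (Icc a b)) (hf' : ∀ t ∈ Ioo a b, HasDerivAt f (f' t) t)
    (bound : ∀ t ∈ Ioo a b, ‖f' t‖ ≤ K * ‖f t‖ + ε) :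
    ∀ t ∈ Icc a b, ‖f t‖ ≤ gronwallBound ‖f a‖ K ε (t - a) := by
  intro t ht
  rcases ht.1.eq_or_lt with rfl | hat
  · simp [gronwallBound_x0]
  -- Mathlib's version needs a right derivative at the left endpoint: apply it on `[a', t]`
  -- and let `a' → a⁺`.
  have hfa : Tendsto f (𝓝[>] a) (𝓝 (f a)) :=
    (hf a ⟨le_rfl, ht.1.trans ht.2⟩).tendsto.mono_left
      (nhdsWithin_le_of_mem (Icc_mem_nhdsGT (hat.trans_le ht.2)))
  have hlim : Tendsto (fun a' => gronwallBound ‖f a'‖ K ε (t - a')) (𝓝[>] a)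
      (𝓝 (gronwallBound ‖f a‖ K ε (t - a))) :=
    ((continuous_gronwallBound K ε).tendsto _).comp
      (hfa.norm.prodMk_nhds (tendsto_nhdsWithin_of_tendsto_nhds
        (tendsto_const_nhds.sub tendsto_id)))
  refine ge_of_tendsto hlim ?_
  filter_upwards [Ioo_mem_nhdsGT hat] with a' ha'
  exact norm_le_gronwallBound_of_norm_deriv_right_le (f' := f')
    (hf.mono (Icc_subset_Icc ha'.1.le le_rfl))
    (fun τ hτ => (hf' τ ⟨ha'.1.trans_le hτ.1, hτ.2⟩).hasDerivWithinAt) le_rfl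
    (fun τ hτ => bound τ ⟨ha'.1.trans_le hτ.1, hτ.2⟩) t ⟨ha'.2.le, ht.2⟩

theorem norm_sub_sub_smul_le_of_norm_deriv_sub_le {f f' : ℝ → E} {v : E} {η a b : ℝ}
    (hab : a ≤ b) (hf : ContinuousOn f (Icc a b)) (hf' : ∀ t ∈ Ioo a b, HasDerivAt f (f' t) t)
    (bound : ∀ t ∈ Ioo a b, ‖f' t - v‖ ≤ η) :
    ‖f b - f a - (b - a) • v‖ ≤ η * (b - a) := by
  have h := norm_le_gronwallBound_of_norm_deriv_le_Ioo (f := fun t => f t - f a - (t - a) • v)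
    (f' := fun t => f' t - v) (K := 0) (ε := η) (by fun_prop) (fun t ht => by
      simpa using ((hf' t ht).sub_const (f a)).fun_sub
        (((hasDerivAt_id t).sub_const a).smul_const v))
    (fun t ht => by simpa using bound t ht) b ⟨hab, le_rfl⟩
  simpa [gronwallBound_K0, mul_comm] using h

theorem norm_sub_le_mul_exp_of_lipschitz_field {F : E → ℝ → E} {y z : ℝ → E} {a b K : ℝ}
    (hab : a ≤ b) (hy : ContinuousOn y (Icc a b)) (hz : ContinuousOn z (Icc a b))
    (hy' : ∀ t ∈ Ioo a b, HasDerivAt y (F (y t) t) t)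
    (hz' : ∀ t ∈ Ioo a b, HasDerivAt z (F (z t) t) t)
    (hF : ∀ t ∈ Ioo a b, ‖F (z t) t - F (y t) t‖ ≤ K * ‖z t - y t‖) :
    ‖z b - y b‖ ≤ ‖z a - y a‖ * exp (K * (b - a)) := by
  simpa [gronwallBound_ε0] using norm_le_gronwallBound_of_norm_deriv_le_Ioo (ε := 0) (hz.sub hy)
    (fun t ht => (hz' t ht).sub (hy' t ht)) (fun t ht => by simpa using hF t ht) b ⟨hab, le_rfl⟩

theorem norm_sub_le_add_of_norm_deriv_sub_le {y z u w : ℝ → E} {a b ε : ℝ}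
    (hab : a ≤ b) (hy : ContinuousOn y (Icc a b)) (hz : ContinuousOn z (Icc a b))
    (hy' : ∀ t ∈ Ioo a b, HasDerivAt y (u t) t) (hz' : ∀ t ∈ Ioo a b, HasDerivAt z (w t) t)
    (hε : ∀ t ∈ Ioo a b, ‖w t - u t‖ ≤ ε) :
    ‖z b - y b‖ ≤ ‖z a - y a‖ + ε * (b - a) := by
  simpa [gronwallBound_K0] using norm_le_gronwallBound_of_norm_deriv_le_Ioo (K := 0) (hz.sub hy)
    (fun t ht => (hz' t ht).sub (hy' t ht)) (fun t ht => by simpa using hε t ht) b ⟨hab, le_rfl⟩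

end Comparison

section DotProduct

variable {ι : Type*} [Fintype ι]

theorem abs_dotProduct_le_of_norm_le {p q : ι → ℝ} {P Q : ℝ} (hp : ‖p‖ ≤ P) (hq : ‖q‖ ≤ Q) :
    |p ⬝ᵥ q| ≤ Fintype.card ι * P * Q := by
  have hP : 0 ≤ P := (norm_nonneg p).trans hp
  calc |p ⬝ᵥ q| ≤ ∑ i, |p i * q i| := Finset.abs_sum_le_sum_abs _ _
    _ ≤ ∑ _i : ι, P * Q := Finset.sum_le_sum fun i _ => by
        rw [abs_mul]
        exact mul_le_mul ((norm_le_pi_norm p i).trans hp) ((norm_le_pi_norm q i).trans hq)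
          (abs_nonneg _) hP
    _ = _ := by simp [mul_assoc]

theorem abs_dotProduct_sub_sub_sub_le {p a b c v : ι → ℝ} {P K e h ω : ℝ} (hp : ‖p‖ ≤ P)
    (hab : ‖a - b‖ ≤ K * e) (hv : ‖v‖ ≤ K * e) (hω : |p ⬝ᵥ (b - c) - h| ≤ ω) :
    |p ⬝ᵥ (a - c - v) - h| ≤ 2 * Fintype.card ι * P * K * e + ω := by
  have hsplit : p ⬝ᵥ (a - c - v) - h = p ⬝ᵥ (a - b) - p ⬝ᵥ v + (p ⬝ᵥ (b - c) - h) := by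
    simp only [dotProduct_sub]
    ring
  rw [hsplit]
  calc _ ≤ |p ⬝ᵥ (a - b)| + |p ⬝ᵥ v| + |p ⬝ᵥ (b - c) - h| :=
        (abs_add_le _ _).trans (add_le_add_left (abs_sub _ _) _)
    _ ≤ _ := by
        linarith [abs_dotProduct_le_of_norm_le hp hab, abs_dotProduct_le_of_norm_le hp hv]

theorem HasDerivAt.dotProduct {u v : ℝ → ι → ℝ} {u' v' : ι → ℝ} {t : ℝ}
    (hu : HasDerivAt u u' t) (hv : HasDerivAt v v' t) :
    HasDerivAt (fun τ => u τ ⬝ᵥ v τ) (u' ⬝ᵥ v t + u t ⬝ᵥ v') t := by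
  unfold _root_.dotProduct
  rw [← Finset.sum_add_distrib]
  exact HasDerivAt.fun_sum fun i _ => (hasDerivAt_pi.1 hu i).mul (hasDerivAt_pi.1 hv i)

variable [DecidableEq ι]

theorem HasDerivAt.dotProduct_sub_of_costate {p y z : ℝ → ι → ℝ} {A : (ι → ℝ) →L[ℝ] (ι → ℝ)}
    {u w : ι → ℝ} {t : ℝ}
    (hp : HasDerivAt p (-(p t ᵥ* LinearMap.toMatrix' (A : (ι → ℝ) →ₗ[ℝ] ι → ℝ))) t)
    (hy : HasDerivAt y u t) (hz : HasDerivAt z w t) :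
    HasDerivAt (fun τ => p τ ⬝ᵥ (z τ - y τ)) (p t ⬝ᵥ (w - u - A (z t - y t))) t := by
  refine (hp.dotProduct (hz.sub hy)).congr_deriv ?_
  rw [neg_dotProduct, ← dotProduct_mulVec, LinearMap.toMatrix'_mulVec]
  simp only [ContinuousLinearMap.coe_coe, Pi.sub_apply, dotProduct_sub]
  ring

theorem abs_pairing_sub_sub_le {p y z u w : ℝ → ι → ℝ}
    {A : ℝ → (ι → ℝ) →L[ℝ] (ι → ℝ)} {a b h η : ℝ} (hab : a ≤ b)
    (hp : ContinuousOn p (Icc a b)) (hy : ContinuousOn y (Icc a b))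
    (hz : ContinuousOn z (Icc a b))
    (hp' : ∀ t ∈ Ioo a b,
      HasDerivAt p (-(p t ᵥ* LinearMap.toMatrix' (A t : (ι → ℝ) →ₗ[ℝ] ι → ℝ))) t)
    (hy' : ∀ t ∈ Ioo a b, HasDerivAt y (u t) t) (hz' : ∀ t ∈ Ioo a b, HasDerivAt z (w t) t)
    (bound : ∀ t ∈ Ioo a b, |p t ⬝ᵥ (w t - u t - A t (z t - y t)) - h| ≤ η) :
    |p b ⬝ᵥ (z b - y b) - p a ⬝ᵥ (z a - y a) - (b - a) * h| ≤ η * (b - a) :=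
  norm_sub_sub_smul_le_of_norm_deriv_sub_le hab
    ((continuous_fst.dotProduct continuous_snd).comp_continuousOn (hp.prodMk (hz.sub hy)))
    (fun t ht => (hp' t ht).dotProduct_sub_of_costate (hy' t ht) (hz' t ht)) bound

theorem ContinuousLinearMap.apply_eq_dotProduct (l : (ι → ℝ) →L[ℝ] ℝ) {q v : ι → ℝ}
    {E : Finset ι} (hq : ∀ i ∈ Eᶜ, q i = l (Pi.single i 1)) (hv : ∀ i ∈ E, v i = 0) :
    l v = q ⬝ᵥ v := by
  have hsum := (l : (ι → ℝ) →ₗ[ℝ] ℝ).pi_apply_eq_sum_univ v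
  rw [ContinuousLinearMap.coe_coe] at hsum
  rw [hsum, dotProduct]
  refine Finset.sum_congr rfl fun i _ => ?_
  by_cases hi : i ∈ E
  · simp [hv i hi]
  · have hsingle : (fun j => if i = j then (1 : ℝ) else 0) = Pi.single i 1 := by
      ext j
      simp [Pi.single_apply, eq_comm]
    simp [hsingle, hq i (Finset.mem_compl.2 hi), mul_comm]

theorem dotProduct_sub_eq_zero {p y z : ι → ℝ} {I : Finset ι} (hp : ∀ j ∈ Iᶜ, p j = 0)
    (hyz : ∀ i ∈ I, z i = y i) : p ⬝ᵥ (z - y) = 0 :=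
  Finset.sum_eq_zero fun i _ => by
    by_cases hi : i ∈ I
    · simp [hyz i hi]
    · simp [hp i (Finset.mem_compl.2 hi)]

theorem norm_le_norm_restrict_compl {v : ι → ℝ} {I : Finset ι} (hv : ∀ i ∈ I, v i = 0) :
    ‖v‖ ≤ ‖fun j : {j // j ∈ Iᶜ} => v j‖ := by
  refine (pi_norm_le_iff_of_nonneg (norm_nonneg _)).2 fun i => ?_
  by_cases hi : i ∈ I
  · simp [hv i hi]
  · exact norm_le_pi_norm (fun j : {j // j ∈ Iᶜ} => v j) ⟨i, Finset.mem_compl.2 hi⟩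

end DotProduct

theorem isLittleO_objective_sub_dotProduct {n : ℕ} {C : (Fin n → ℝ) → ℝ} {x₀ q : Fin n → ℝ}
    {E : Finset (Fin n)} (hC : DifferentiableAt ℝ C x₀)
    (hq : ∀ i ∈ Eᶜ, q i = fderiv ℝ C x₀ (Pi.single i 1)) {y : ℝ → Fin n → ℝ} {c : ℝ}
    (hyE : ∀ᶠ δ in 𝓝 0, ∀ i ∈ E, y δ i = x₀ i)
    (hy : ∀ᶠ δ in 𝓝 0, ‖y δ - x₀‖ ≤ c * |δ|) :
    (fun δ => C (y δ) - C x₀ - q ⬝ᵥ (y δ - x₀)) =o[𝓝 0] fun δ => δ := by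
  have hO : (fun δ => y δ - x₀) =O[𝓝 0] fun δ => δ := Asymptotics.IsBigO.of_bound c hy
  have hlim : Tendsto y (𝓝 0) (𝓝 x₀) :=
    tendsto_sub_nhds_zero_iff.1 (hO.trans_tendsto tendsto_id)
  refine ((hC.hasFDerivAt.isLittleO.comp_tendsto hlim).trans_isBigO hO).congr' ?_
    (EventuallyEq.refl _ _)
  filter_upwards [hyE] with δ hδ
  simp only [Function.comp_apply]
  rw [(fderiv ℝ C x₀).apply_eq_dotProduct (v := y δ - x₀) hq fun i hi => by simp [hδ i hi]]

theorem isCompact_tube {E : Type*} [NormedAddCommGroup E] [ProperSpace E] {x : ℝ → E}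
    {a b ρ : ℝ} (hx : ContinuousOn x (Icc a b)) :
    IsCompact {q : E × ℝ | q.2 ∈ Icc a b ∧ ‖q.1 - x q.2‖ ≤ ρ} := by
  have hcont : ContinuousOn (fun q : E × ℝ => (q.1 + x q.2, q.2)) (closedBall 0 ρ ×ˢ Icc a b) :=
    (continuousOn_fst.add (hx.comp continuousOn_snd fun q hq => hq.2)).prodMk continuousOn_snd
  convert ((isCompact_closedBall 0 ρ).prod isCompact_Icc).image_of_continuousOn hcont using 1
  ext ⟨χ, t⟩
  refine ⟨fun ⟨ht, hχ⟩ => ⟨(χ - x t, t), ⟨by simpa using hχ, ht⟩, by simp⟩, ?_⟩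
  rintro ⟨⟨v, t⟩, ⟨hv, ht⟩, hq⟩
  simp only [Prod.mk.injEq] at hq
  obtain ⟨rfl, rfl⟩ := hq
  exact ⟨ht, by simpa using hv⟩

namespace DynSmooth

variable {n : ℕ} {Fd : (Fin n → ℝ) → ℝ → Fin n → ℝ}
  {DFd : (Fin n → ℝ) → ℝ → (Fin n → ℝ) →L[ℝ] (Fin n → ℝ)} {x : ℝ → Fin n → ℝ} {a b ρ L : ℝ}

theorem mono (h : DynSmooth n Fd DFd x a b ρ L) {a' b' : ℝ} (ha : a ≤ a') (hb : b' ≤ b) :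
    DynSmooth n Fd DFd x a' b' ρ L where
  contDiffOn := h.contDiffOn.mono fun _ hq => ⟨Icc_subset_Icc ha hb hq.1, hq.2⟩
  hasFDeriv χ t ht := h.hasFDeriv χ t (Icc_subset_Icc ha hb ht)
  contDeriv := h.contDeriv.mono fun _ hq => ⟨Icc_subset_Icc ha hb hq.1, hq.2⟩
  lip t χ₁ χ₂ ht := h.lip t χ₁ χ₂ (Icc_subset_Icc ha hb ht)

theorem exists_bound (h : DynSmooth n Fd DFd x a b ρ L) (hx : ContinuousOn x (Icc a b)) :
    ∃ B K, 0 ≤ B ∧ 0 ≤ K ∧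
      ∀ t ∈ Icc a b, ∀ χ, ‖χ - x t‖ ≤ ρ → ‖Fd χ t‖ ≤ B ∧ ‖DFd χ t‖ ≤ K := by
  obtain ⟨B, hB⟩ := (isCompact_tube hx).exists_bound_of_continuousOn h.contDiffOn.continuousOn
  obtain ⟨K, hK⟩ := (isCompact_tube hx).exists_bound_of_continuousOn h.contDeriv
  exact ⟨max B 0, max K 0, le_max_right _ _, le_max_right _ _, fun t ht χ hχ =>
    ⟨(hB (χ, t) ⟨ht, hχ⟩).trans (le_max_left _ _), (hK (χ, t) ⟨ht, hχ⟩).trans (le_max_left _ _)⟩⟩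

theorem continuousOn_along (h : DynSmooth n Fd DFd x a b ρ L) (hx : ContinuousOn x (Icc a b))
    (hρ : 0 ≤ ρ) : ContinuousOn (fun t => Fd (x t) t) (Icc a b) :=
  h.contDiffOn.continuousOn.comp (hx.prodMk continuousOn_id) fun t ht => ⟨ht, by simpa using hρ⟩

theorem norm_sub_le (h : DynSmooth n Fd DFd x a b ρ L) {t K : ℝ} (ht : t ∈ Icc a b)
    (hK : ∀ χ, ‖χ - x t‖ ≤ ρ → ‖DFd χ t‖ ≤ K) {χ₁ χ₂ : Fin n → ℝ} (h₁ : ‖χ₁ - x t‖ ≤ ρ)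
    (h₂ : ‖χ₂ - x t‖ ≤ ρ) : ‖Fd χ₁ t - Fd χ₂ t‖ ≤ K * ‖χ₁ - χ₂‖ := by
  have hball : ∀ y ∈ closedBall (x t) ρ, ‖y - x t‖ ≤ ρ := fun y hy => by
    rwa [mem_closedBall, dist_eq_norm] at hy
  refine (convex_closedBall (x t) ρ).norm_image_sub_le_of_norm_hasFDerivWithin_le
    (f := fun y => Fd y t) (fun y hy => (h.hasFDeriv y t ht (hball y hy)).hasFDerivWithinAt)
    (fun y hy => hK y (hball y hy)) ?_ ?_
  · rwa [mem_closedBall, dist_eq_norm]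
  · rwa [mem_closedBall, dist_eq_norm]

theorem norm_sub_sub_le (h : DynSmooth n Fd DFd x a b ρ L) {t : ℝ} (ht : t ∈ Icc a b)
    {χ : Fin n → ℝ} (hχ : ‖χ - x t‖ ≤ ρ) :
    ‖Fd χ t - Fd (x t) t - DFd (x t) t (χ - x t)‖ ≤ max L 0 * ‖χ - x t‖ ^ 2 := by
  have hρ : 0 ≤ ρ := (norm_nonneg _).trans hχ
  have hball : ∀ y ∈ closedBall (x t) ‖χ - x t‖, ‖y - x t‖ ≤ ‖χ - x t‖ := fun y hy => by
    rwa [mem_closedBall, dist_eq_norm] at hy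
  have hrem := (convex_closedBall (x t) ‖χ - x t‖).norm_image_sub_le_of_norm_hasFDerivWithin_le'
    (f := fun y => Fd y t) (φ := DFd (x t) t) (C := max L 0 * ‖χ - x t‖)
    (fun y hy => (h.hasFDeriv y t ht ((hball y hy).trans hχ)).hasFDerivWithinAt)
    (fun y hy => calc
      ‖DFd y t - DFd (x t) t‖ ≤ L * ‖y - x t‖ :=
        h.lip t y (x t) ht ((hball y hy).trans hχ) (by simpa using hρ)
      _ ≤ max L 0 * ‖χ - x t‖ :=
        mul_le_mul (le_max_left _ _) (hball y hy) (norm_nonneg _) (le_max_right _ _))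
    (mem_closedBall_self (norm_nonneg _)) (by rw [mem_closedBall, dist_eq_norm])
  calc _ ≤ max L 0 * ‖χ - x t‖ * ‖χ - x t‖ := hrem
    _ = max L 0 * ‖χ - x t‖ ^ 2 := by ring

theorem abs_dotProduct_sub_sub_le (h : DynSmooth n Fd DFd x a b ρ L) {t P e : ℝ}
    (ht : t ∈ Icc a b) {q χ : Fin n → ℝ} (hq : ‖q‖ ≤ P) (hχ : ‖χ - x t‖ ≤ e) (heρ : e ≤ ρ) :
    |q ⬝ᵥ (Fd χ t - Fd (x t) t - DFd (x t) t (χ - x t))| ≤ n * P * max L 0 * e ^ 2 := by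
  have hrem := (h.norm_sub_sub_le ht (hχ.trans heρ)).trans
    (mul_le_mul_of_nonneg_left (pow_le_pow_left₀ (norm_nonneg _) hχ 2) (le_max_right L 0))
  simpa [mul_assoc] using abs_dotProduct_le_of_norm_le hq hrem

end DynSmooth

def IsSwitchTraj {n : ℕ} (T σ : ℝ) (F₀ F₁ : (Fin n → ℝ) → ℝ → Fin n → ℝ)
    (y : ℝ → Fin n → ℝ) : Prop :=
  ContinuousOn y (Icc 0 T) ∧ (∀ t ∈ Ioo 0 T, t < σ → HasDerivAt y (F₀ (y t) t) t) ∧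
    ∀ t ∈ Ioo 0 T, σ < t → HasDerivAt y (F₁ (y t) t) t

section Switching

variable {n : ℕ} {F₀ F₁ : (Fin n → ℝ) → ℝ → Fin n → ℝ}
  {DF₀ DF₁ : (Fin n → ℝ) → ℝ → (Fin n → ℝ) →L[ℝ] (Fin n → ℝ)} {x y z p : ℝ → Fin n → ℝ}
  {T s σ r ρ L B K P e a b : ℝ}

theorem IsSwitchSol.isSwitchTraj {I E : Finset (Fin n)} {bI bE : Fin n → ℝ}
    (h : IsSwitchSol T σ I E bI bE F₀ F₁ y) : IsSwitchTraj T σ F₀ F₁ y :=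
  ⟨h.1, fun t ht htσ => (h.2.1 t ⟨ht.1.le, htσ⟩).hasDerivAt (Icc_mem_nhds ht.1 ht.2),
    fun t ht htσ => (h.2.2.1 t ⟨htσ, ht.2.le⟩).hasDerivAt (Icc_mem_nhds ht.1 ht.2)⟩

theorem IsSwitchTraj.hasDerivAt (h : IsSwitchTraj T σ F₀ F₁ y) {t : ℝ} (ht : t ∈ Ioo 0 T)
    (htσ : t ≠ σ) : HasDerivAt y (if t < σ then F₀ (y t) t else F₁ (y t) t) t := by
  rcases htσ.lt_or_gt with h' | h'
  · simpa [h'] using h.2.1 t ht h'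
  · simpa [h'.not_gt] using h.2.2 t ht h'

theorem hasDerivAt_costate_of_lt
    (hpode : ∀ t ∈ Icc 0 T, t ≠ s →
      HasDerivWithinAt p (-(p t ᵥ* jacMat DF₀ DF₁ x s t)) (Icc 0 T) t)
    {t : ℝ} (ht : t ∈ Ioo 0 T) (hts : t < s) :
    HasDerivAt p (-(p t ᵥ* LinearMap.toMatrix' (DF₀ (x t) t : (Fin n → ℝ) →ₗ[ℝ] Fin n → ℝ))) t := by
  simpa [jacMat, hts] using
    (hpode t ⟨ht.1.le, ht.2.le⟩ hts.ne).hasDerivAt (Icc_mem_nhds ht.1 ht.2)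

theorem hasDerivAt_costate_of_gt
    (hpode : ∀ t ∈ Icc 0 T, t ≠ s →
      HasDerivWithinAt p (-(p t ᵥ* jacMat DF₀ DF₁ x s t)) (Icc 0 T) t)
    {t : ℝ} (ht : t ∈ Ioo 0 T) (hts : s < t) :
    HasDerivAt p (-(p t ᵥ* LinearMap.toMatrix' (DF₁ (x t) t : (Fin n → ℝ) →ₗ[ℝ] Fin n → ℝ))) t := by
  simpa [jacMat, hts.not_gt] using
    (hpode t ⟨ht.1.le, ht.2.le⟩ hts.ne').hasDerivAt (Icc_mem_nhds ht.1 ht.2)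

theorem IsSwitchTraj.norm_sub_le_mul_exp_of_le_min (hx : IsSwitchTraj T s F₀ F₁ x)
    (hz : IsSwitchTraj T σ F₀ F₁ z) (ha : 0 ≤ a) (hab : a ≤ b) (hb : b ≤ min s σ)
    (hbT : b ≤ T) (hlip : ∀ t ∈ Ioo a b, ‖F₀ (z t) t - F₀ (x t) t‖ ≤ K * ‖z t - x t‖) :
    ‖z b - x b‖ ≤ ‖z a - x a‖ * exp (K * (b - a)) := by
  have hmem : ∀ t ∈ Ioo a b, t ∈ Ioo 0 T := fun t ht => ⟨ha.trans_lt ht.1, ht.2.trans_le hbT⟩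
  exact norm_sub_le_mul_exp_of_lipschitz_field hab (hx.1.mono (Icc_subset_Icc ha hbT))
    (hz.1.mono (Icc_subset_Icc ha hbT))
    (fun t ht => hx.2.1 t (hmem t ht) (ht.2.trans_le (hb.trans (min_le_left _ _))))
    (fun t ht => hz.2.1 t (hmem t ht) (ht.2.trans_le (hb.trans (min_le_right _ _)))) hlip

theorem IsSwitchTraj.norm_sub_le_mul_exp_of_max_le (hx : IsSwitchTraj T s F₀ F₁ x)
    (hz : IsSwitchTraj T σ F₀ F₁ z) (ha₀ : 0 ≤ a) (ha : max s σ ≤ a) (hab : a ≤ b)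
    (hbT : b ≤ T) (hlip : ∀ t ∈ Ioo a b, ‖F₁ (z t) t - F₁ (x t) t‖ ≤ K * ‖z t - x t‖) :
    ‖z b - x b‖ ≤ ‖z a - x a‖ * exp (K * (b - a)) := by
  have hmem : ∀ t ∈ Ioo a b, t ∈ Ioo 0 T := fun t ht => ⟨ha₀.trans_lt ht.1, ht.2.trans_le hbT⟩
  exact norm_sub_le_mul_exp_of_lipschitz_field hab (hx.1.mono (Icc_subset_Icc ha₀ hbT))
    (hz.1.mono (Icc_subset_Icc ha₀ hbT))
    (fun t ht => hx.2.2 t (hmem t ht) ((le_max_left _ _).trans_lt (ha.trans_lt ht.1)))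
    (fun t ht => hz.2.2 t (hmem t ht) ((le_max_right _ _).trans_lt (ha.trans_lt ht.1))) hlip

theorem IsSwitchTraj.norm_sub_le_add_of_subset_uIoo (hx : IsSwitchTraj T s F₀ F₁ x)
    (hz : IsSwitchTraj T σ F₀ F₁ z) (ha : 0 ≤ a) (hab : a ≤ b) (hbT : b ≤ T)
    (hsub : Ioo a b ⊆ uIoo s σ)
    (hB : ∀ t ∈ Ioo a b, ∀ χ, ‖χ - x t‖ ≤ ρ → ‖F₀ χ t‖ ≤ B ∧ ‖F₁ χ t‖ ≤ B)
    (htube : ∀ t ∈ Ioo a b, ‖z t - x t‖ ≤ ρ) :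
    ‖z b - x b‖ ≤ ‖z a - x a‖ + 2 * B * (b - a) := by
  have hmem : ∀ t ∈ Ioo a b, t ∈ Ioo 0 T := fun t ht => ⟨ha.trans_lt ht.1, ht.2.trans_le hbT⟩
  refine norm_sub_le_add_of_norm_deriv_sub_le hab (hx.1.mono (Icc_subset_Icc ha hbT))
    (hz.1.mono (Icc_subset_Icc ha hbT))
    (fun t ht => hx.hasDerivAt (hmem t ht) (ne_of_mem_of_not_mem (hsub ht) left_notMem_uIoo))
    (fun t ht => hz.hasDerivAt (hmem t ht) (ne_of_mem_of_not_mem (hsub ht) right_notMem_uIoo))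
    fun t ht => ?_
  have hzt := hB t ht (z t) (htube t ht)
  have hxt := hB t ht (x t) (by simpa using (norm_nonneg _).trans (htube t ht))
  calc _ ≤ ‖if t < σ then F₀ (z t) t else F₁ (z t) t‖
        + ‖if t < s then F₀ (x t) t else F₁ (x t) t‖ := norm_sub_le _ _
    _ ≤ B + B := by gcongr <;> split_ifs <;> tauto
    _ = 2 * B := by ring

theorem norm_sub_le_of_le_max (hrs : r ≤ s) (hσ : |σ - s| ≤ r)
    (hx : IsSwitchTraj T s F₀ F₁ x) (hz : IsSwitchTraj T σ F₀ F₁ z) (hK : 0 ≤ K) (hB : 0 ≤ B)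
    (hF₀ : ∀ t ∈ Icc 0 (s + r), ∀ χ, ‖χ - x t‖ ≤ ρ →
      ‖F₀ χ t‖ ≤ B ∧ ‖F₀ χ t - F₀ (x t) t‖ ≤ K * ‖χ - x t‖)
    (hF₁ : ∀ t ∈ Icc (s - r) T, ∀ χ, ‖χ - x t‖ ≤ ρ → ‖F₁ χ t‖ ≤ B)
    {t : ℝ} (ht : t ∈ Icc 0 T) (htM : t ≤ max s σ) (htube : ∀ τ ∈ Ioo 0 t, ‖z τ - x τ‖ ≤ ρ) :
    ‖z t - x t‖ ≤ ‖z 0 - x 0‖ * exp (K * T) + 2 * B * |σ - s| := by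
  have hσr := abs_le.1 hσ
  have hm : s - r ≤ min s σ := le_min (by linarith) (by linarith)
  have hm0 : 0 ≤ min s σ := hm.trans' (by linarith)
  have hM : max s σ ≤ s + r := max_le (by linarith) (by linarith)
  have hbefore : ∀ τ ∈ Icc 0 (min s σ), τ ≤ t → ‖z τ - x τ‖ ≤ ‖z 0 - x 0‖ * exp (K * T) := by
    intro τ hτ hτt
    calc _ ≤ ‖z 0 - x 0‖ * exp (K * (τ - 0)) :=
          hx.norm_sub_le_mul_exp_of_le_min hz le_rfl hτ.1 hτ.2 (hτt.trans ht.2) fun u hu =>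
            (hF₀ u ⟨hu.1.le, by linarith [hu.2, hτ.2, min_le_left s σ]⟩ _
              (htube u ⟨hu.1, hu.2.trans_le hτt⟩)).2
      _ ≤ _ := by gcongr; linarith [ht.2]
  rcases le_total t (min s σ) with htm | hmt
  · exact (hbefore t ⟨ht.1, htm⟩ le_rfl).trans (le_add_of_nonneg_right (by positivity))
  calc _ ≤ ‖z (min s σ) - x (min s σ)‖ + 2 * B * (t - min s σ) :=
        hx.norm_sub_le_add_of_subset_uIoo hz hm0 hmt ht.2 (Ioo_subset_Ioo_right htM)
          (fun u hu χ hχ => ⟨(hF₀ u ⟨by linarith [hu.1], by linarith [hu.2]⟩ χ hχ).1,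
            hF₁ u ⟨by linarith [hu.1], by linarith [hu.2, ht.2]⟩ χ hχ⟩)
          fun u hu => htube u ⟨hm0.trans_lt hu.1, hu.2⟩
    _ ≤ _ := by
        gcongr
        · exact hbefore _ ⟨hm0, le_rfl⟩ hmt
        · linarith [max_sub_min_eq_abs' σ s, min_comm s σ, max_comm s σ]

theorem norm_sub_le_of_forall_Ioo_norm_sub_le (hrs : r ≤ s) (hσ : |σ - s| ≤ r)
    (hx : IsSwitchTraj T s F₀ F₁ x) (hz : IsSwitchTraj T σ F₀ F₁ z) (hK : 0 ≤ K) (hB : 0 ≤ B)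
    (hF₀ : ∀ t ∈ Icc 0 (s + r), ∀ χ, ‖χ - x t‖ ≤ ρ →
      ‖F₀ χ t‖ ≤ B ∧ ‖F₀ χ t - F₀ (x t) t‖ ≤ K * ‖χ - x t‖)
    (hF₁ : ∀ t ∈ Icc (s - r) T, ∀ χ, ‖χ - x t‖ ≤ ρ →
      ‖F₁ χ t‖ ≤ B ∧ ‖F₁ χ t - F₁ (x t) t‖ ≤ K * ‖χ - x t‖)
    {t : ℝ} (ht : t ∈ Icc 0 T) (htube : ∀ τ ∈ Ioo 0 t, ‖z τ - x τ‖ ≤ ρ) :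
    ‖z t - x t‖ ≤ (‖z 0 - x 0‖ * exp (K * T) + 2 * B * |σ - s|) * exp (K * T) := by
  have hσr := abs_le.1 hσ
  have hM0 : 0 ≤ max s σ := le_max_of_le_left (by linarith)
  have hbound := fun τ (hτ : τ ∈ Icc 0 T) => norm_sub_le_of_le_max (t := τ) hrs hσ hx hz hK hB
    hF₀ (fun u hu χ hχ => (hF₁ u hu χ hχ).1) hτ
  have hexp : 1 ≤ exp (K * T) := one_le_exp (mul_nonneg hK (ht.1.trans ht.2))
  rcases le_total t (max s σ) with htM | hMt
  · exact (hbound t ht htM htube).trans (le_mul_of_one_le_right (by positivity) hexp)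
  calc _ ≤ ‖z (max s σ) - x (max s σ)‖ * exp (K * (t - max s σ)) :=
        hx.norm_sub_le_mul_exp_of_max_le hz hM0 le_rfl hMt ht.2 fun u hu =>
          (hF₁ u ⟨by linarith [hu.1, le_max_left s σ], hu.2.le.trans ht.2⟩ _
            (htube u ⟨hM0.trans_lt hu.1, hu.2⟩)).2
    _ ≤ _ := by
        gcongr
        · exact hbound _ ⟨hM0, hMt.trans ht.2⟩ le_rfl fun u hu =>
            htube u ⟨hu.1, hu.2.trans_le hMt⟩
        · linarith [ht.2]

theorem norm_sub_le_of_isSwitchTraj (hrs : r ≤ s) (hσ : |σ - s| ≤ r)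
    (hx : IsSwitchTraj T s F₀ F₁ x) (hz : IsSwitchTraj T σ F₀ F₁ z) (hK : 0 ≤ K) (hB : 0 ≤ B)
    (hF₀ : ∀ t ∈ Icc 0 (s + r), ∀ χ, ‖χ - x t‖ ≤ ρ →
      ‖F₀ χ t‖ ≤ B ∧ ‖F₀ χ t - F₀ (x t) t‖ ≤ K * ‖χ - x t‖)
    (hF₁ : ∀ t ∈ Icc (s - r) T, ∀ χ, ‖χ - x t‖ ≤ ρ →
      ‖F₁ χ t‖ ≤ B ∧ ‖F₁ χ t - F₁ (x t) t‖ ≤ K * ‖χ - x t‖)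
    (hR : (‖z 0 - x 0‖ * exp (K * T) + 2 * B * |σ - s|) * exp (K * T) < ρ) :
    ∀ t ∈ Icc 0 T,
      ‖z t - x t‖ ≤ (‖z 0 - x 0‖ * exp (K * T) + 2 * B * |σ - s|) * exp (K * T) := by
  have apriori := fun t (ht : t ∈ Icc 0 T) => norm_sub_le_of_forall_Ioo_norm_sub_le hrs hσ hx
    hz hK hB hF₀ hF₁ ht
  have hlt : ∀ t ∈ Icc 0 T, ‖z t - x t‖ < ρ :=
    (hz.1.sub hx.1).norm.forall_lt_of_forall_Ico_lt fun t ht htube =>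
      (apriori t ht fun τ hτ => (htube τ ⟨hτ.1.le, hτ.2⟩).le).trans_lt hR
  exact fun t ht => apriori t ht fun τ hτ => (hlt τ ⟨hτ.1.le, hτ.2.le.trans ht.2⟩).le

theorem exists_bound_of_dynSmooth (hrs : r ≤ s) (hrT : s + r ≤ T)
    (hx : ContinuousOn x (Icc 0 T))
    (hds₀ : DynSmooth n F₀ DF₀ x 0 (s + r) ρ L) (hds₁ : DynSmooth n F₁ DF₁ x (s - r) T ρ L) :
    ∃ B K, 0 ≤ B ∧ 0 ≤ K ∧
      (∀ t ∈ Icc 0 (s + r), ∀ χ, ‖χ - x t‖ ≤ ρ → ‖F₀ χ t‖ ≤ B ∧ ‖DF₀ χ t‖ ≤ K) ∧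
      ∀ t ∈ Icc (s - r) T, ∀ χ, ‖χ - x t‖ ≤ ρ → ‖F₁ χ t‖ ≤ B ∧ ‖DF₁ χ t‖ ≤ K := by
  obtain ⟨B₀, K₀, hB₀, hK₀, hbd₀⟩ := hds₀.exists_bound (hx.mono (Icc_subset_Icc le_rfl hrT))
  obtain ⟨B₁, K₁, -, -, hbd₁⟩ :=
    hds₁.exists_bound (hx.mono (Icc_subset_Icc (sub_nonneg.2 hrs) le_rfl))
  refine ⟨max B₀ B₁, max K₀ K₁, hB₀.trans (le_max_left _ _), hK₀.trans (le_max_left _ _),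
    fun t ht χ hχ => ?_, fun t ht χ hχ => ?_⟩
  · exact ⟨(hbd₀ t ht χ hχ).1.trans (le_max_left _ _), (hbd₀ t ht χ hχ).2.trans (le_max_left _ _)⟩
  · exact ⟨(hbd₁ t ht χ hχ).1.trans (le_max_right _ _),
      (hbd₁ t ht χ hχ).2.trans (le_max_right _ _)⟩

theorem exists_eventually_norm_sub_le (hr : 0 < r) (hrs : r ≤ s) (hrT : s + r ≤ T) (hρ : 0 < ρ)
    (hx : IsSwitchTraj T s F₀ F₁ x)
    (hds₀ : DynSmooth n F₀ DF₀ x 0 (s + r) ρ L) (hds₁ : DynSmooth n F₁ DF₁ x (s - r) T ρ L)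
    {xp : ℝ → ℝ → Fin n → ℝ} {c : ℝ}
    (hxp : ∀ᶠ Δs in 𝓝 0, IsSwitchTraj T (s + Δs) F₀ F₁ (xp Δs) ∧ ‖xp Δs 0 - x 0‖ ≤ c * |Δs|) :
    ∃ C, ∀ᶠ Δs in 𝓝 0, ∀ t ∈ Icc 0 T, ‖xp Δs t - x t‖ ≤ C * |Δs| := by
  obtain ⟨B, K, hB, hK, hbd₀, hbd₁⟩ := exists_bound_of_dynSmooth hrs hrT hx.1 hds₀ hds₁
  have hF₀ : ∀ t ∈ Icc 0 (s + r), ∀ χ, ‖χ - x t‖ ≤ ρ →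
      ‖F₀ χ t‖ ≤ B ∧ ‖F₀ χ t - F₀ (x t) t‖ ≤ K * ‖χ - x t‖ := fun t ht χ hχ =>
    ⟨(hbd₀ t ht χ hχ).1, hds₀.norm_sub_le ht (fun χ hχ => (hbd₀ t ht χ hχ).2) hχ
      (by simpa using hρ.le)⟩
  have hF₁ : ∀ t ∈ Icc (s - r) T, ∀ χ, ‖χ - x t‖ ≤ ρ →
      ‖F₁ χ t‖ ≤ B ∧ ‖F₁ χ t - F₁ (x t) t‖ ≤ K * ‖χ - x t‖ := fun t ht χ hχ =>
    ⟨(hbd₁ t ht χ hχ).1, hds₁.norm_sub_le ht (fun χ hχ => (hbd₁ t ht χ hχ).2) hχ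
      (by simpa using hρ.le)⟩
  set C := (c * exp (K * T) + 2 * B) * exp (K * T)
  refine ⟨C, ?_⟩
  filter_upwards [hxp, eventually_mul_abs_lt 1 hr, eventually_mul_abs_lt C hρ]
    with Δs ⟨hz, hz0⟩ hΔr hΔρ
  have hR : (‖xp Δs 0 - x 0‖ * exp (K * T) + 2 * B * |s + Δs - s|) * exp (K * T) ≤ C * |Δs| := by
    rw [add_sub_cancel_left]
    calc _ ≤ (c * |Δs| * exp (K * T) + 2 * B * |Δs|) * exp (K * T) := by gcongr
      _ = C * |Δs| := by ring
  exact fun t ht => (norm_sub_le_of_isSwitchTraj hrs (by simpa using hΔr.le) hx hz hK hB hF₀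
    hF₁ (hR.trans_lt hΔρ) t ht).trans hR

theorem abs_pairing_sub_le_of_le_min (hx : IsSwitchTraj T s F₀ F₁ x)
    (hz : IsSwitchTraj T σ F₀ F₁ z) (hpc : ContinuousOn p (Icc 0 T))
    (hpode : ∀ t ∈ Icc 0 T, t ≠ s →
      HasDerivWithinAt p (-(p t ᵥ* jacMat DF₀ DF₁ x s t)) (Icc 0 T) t)
    (hds : DynSmooth n F₀ DF₀ x a b ρ L) (ha : 0 ≤ a) (hab : a ≤ b) (hb : b ≤ min s σ)
    (hbT : b ≤ T) (hP : ∀ t ∈ Ioo a b, ‖p t‖ ≤ P) (he : ∀ t ∈ Ioo a b, ‖z t - x t‖ ≤ e)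
    (heρ : e ≤ ρ) :
    |p b ⬝ᵥ (z b - x b) - p a ⬝ᵥ (z a - x a)| ≤ n * P * max L 0 * e ^ 2 * (b - a) := by
  have hmem : ∀ t ∈ Ioo a b, t ∈ Ioo 0 T := fun t ht => ⟨ha.trans_lt ht.1, ht.2.trans_le hbT⟩
  have hlt : ∀ t ∈ Ioo a b, t < s ∧ t < σ := fun t ht => lt_min_iff.1 (ht.2.trans_le hb)
  simpa using abs_pairing_sub_sub_le (h := 0) hab (hpc.mono (Icc_subset_Icc ha hbT))
    (hx.1.mono (Icc_subset_Icc ha hbT)) (hz.1.mono (Icc_subset_Icc ha hbT))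
    (fun t ht => hasDerivAt_costate_of_lt hpode (hmem t ht) (hlt t ht).1)
    (fun t ht => hx.2.1 t (hmem t ht) (hlt t ht).1) (fun t ht => hz.2.1 t (hmem t ht) (hlt t ht).2)
    fun t ht => by
      simpa using hds.abs_dotProduct_sub_sub_le ⟨ht.1.le, ht.2.le⟩ (hP t ht) (he t ht) heρ

theorem abs_pairing_sub_le_of_max_le (hx : IsSwitchTraj T s F₀ F₁ x)
    (hz : IsSwitchTraj T σ F₀ F₁ z) (hpc : ContinuousOn p (Icc 0 T))
    (hpode : ∀ t ∈ Icc 0 T, t ≠ s →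
      HasDerivWithinAt p (-(p t ᵥ* jacMat DF₀ DF₁ x s t)) (Icc 0 T) t)
    (hds : DynSmooth n F₁ DF₁ x a b ρ L) (ha₀ : 0 ≤ a) (ha : max s σ ≤ a) (hab : a ≤ b)
    (hbT : b ≤ T) (hP : ∀ t ∈ Ioo a b, ‖p t‖ ≤ P) (he : ∀ t ∈ Ioo a b, ‖z t - x t‖ ≤ e)
    (heρ : e ≤ ρ) :
    |p b ⬝ᵥ (z b - x b) - p a ⬝ᵥ (z a - x a)| ≤ n * P * max L 0 * e ^ 2 * (b - a) := by
  have hmem : ∀ t ∈ Ioo a b, t ∈ Ioo 0 T := fun t ht => ⟨ha₀.trans_lt ht.1, ht.2.trans_le hbT⟩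
  have hgt : ∀ t ∈ Ioo a b, s < t ∧ σ < t := fun t ht => max_lt_iff.1 (ha.trans_lt ht.1)
  simpa using abs_pairing_sub_sub_le (h := 0) hab (hpc.mono (Icc_subset_Icc ha₀ hbT))
    (hx.1.mono (Icc_subset_Icc ha₀ hbT)) (hz.1.mono (Icc_subset_Icc ha₀ hbT))
    (fun t ht => hasDerivAt_costate_of_gt hpode (hmem t ht) (hgt t ht).1)
    (fun t ht => hx.2.2 t (hmem t ht) (hgt t ht).1) (fun t ht => hz.2.2 t (hmem t ht) (hgt t ht).2)
    fun t ht => by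
      simpa using hds.abs_dotProduct_sub_sub_le ⟨ht.1.le, ht.2.le⟩ (hP t ht) (he t ht) heρ

theorem abs_pairing_sub_sub_le_of_le (hx : IsSwitchTraj T s F₀ F₁ x)
    (hz : IsSwitchTraj T σ F₀ F₁ z) (hpc : ContinuousOn p (Icc 0 T))
    (hpode : ∀ t ∈ Icc 0 T, t ≠ s →
      HasDerivWithinAt p (-(p t ᵥ* jacMat DF₀ DF₁ x s t)) (Icc 0 T) t)
    {h η : ℝ} (hs0 : 0 ≤ s) (hsσ : s ≤ σ) (hσT : σ ≤ T)
    (bound : ∀ t ∈ Ioo s σ, |p t ⬝ᵥ (F₀ (z t) t - F₁ (x t) t - DF₁ (x t) t (z t - x t)) - h| ≤ η) :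
    |p σ ⬝ᵥ (z σ - x σ) - p s ⬝ᵥ (z s - x s) - (σ - s) * h| ≤ η * (σ - s) := by
  have hmem : ∀ t ∈ Ioo s σ, t ∈ Ioo 0 T := fun t ht => ⟨hs0.trans_lt ht.1, ht.2.trans_le hσT⟩
  exact abs_pairing_sub_sub_le hsσ (hpc.mono (Icc_subset_Icc hs0 hσT))
    (hx.1.mono (Icc_subset_Icc hs0 hσT)) (hz.1.mono (Icc_subset_Icc hs0 hσT))
    (fun t ht => hasDerivAt_costate_of_gt hpode (hmem t ht) ht.1)
    (fun t ht => hx.2.2 t (hmem t ht) ht.1) (fun t ht => hz.2.1 t (hmem t ht) ht.2) bound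

theorem abs_pairing_sub_sub_le_of_ge (hx : IsSwitchTraj T s F₀ F₁ x)
    (hz : IsSwitchTraj T σ F₀ F₁ z) (hpc : ContinuousOn p (Icc 0 T))
    (hpode : ∀ t ∈ Icc 0 T, t ≠ s →
      HasDerivWithinAt p (-(p t ᵥ* jacMat DF₀ DF₁ x s t)) (Icc 0 T) t)
    {h η : ℝ} (hσ0 : 0 ≤ σ) (hσs : σ ≤ s) (hsT : s ≤ T)
    (bound : ∀ t ∈ Ioo σ s, |p t ⬝ᵥ (F₁ (z t) t - F₀ (x t) t - DF₀ (x t) t (z t - x t)) - h| ≤ η) :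
    |p s ⬝ᵥ (z s - x s) - p σ ⬝ᵥ (z σ - x σ) - (s - σ) * h| ≤ η * (s - σ) := by
  have hmem : ∀ t ∈ Ioo σ s, t ∈ Ioo 0 T := fun t ht => ⟨hσ0.trans_lt ht.1, ht.2.trans_le hsT⟩
  exact abs_pairing_sub_sub_le hσs (hpc.mono (Icc_subset_Icc hσ0 hsT))
    (hx.1.mono (Icc_subset_Icc hσ0 hsT)) (hz.1.mono (Icc_subset_Icc hσ0 hsT))
    (fun t ht => hasDerivAt_costate_of_lt hpode (hmem t ht) ht.2)
    (fun t ht => hx.2.1 t (hmem t ht) ht.2) (fun t ht => hz.2.2 t (hmem t ht) ht.1) bound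

theorem abs_pairing_sub_sub_le_of_uIoo (hrs : r ≤ s) (hrT : s + r ≤ T) (hσ : |σ - s| ≤ r)
    (hx : IsSwitchTraj T s F₀ F₁ x) (hz : IsSwitchTraj T σ F₀ F₁ z)
    (hpc : ContinuousOn p (Icc 0 T))
    (hpode : ∀ t ∈ Icc 0 T, t ≠ s →
      HasDerivWithinAt p (-(p t ᵥ* jacMat DF₀ DF₁ x s t)) (Icc 0 T) t)
    (hds₀ : DynSmooth n F₀ DF₀ x 0 (s + r) ρ L) (hds₁ : DynSmooth n F₁ DF₁ x (s - r) T ρ L)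
    (hK : 0 ≤ K) (hbd₀ : ∀ t ∈ Icc 0 (s + r), ∀ χ, ‖χ - x t‖ ≤ ρ → ‖DF₀ χ t‖ ≤ K)
    (hbd₁ : ∀ t ∈ Icc (s - r) T, ∀ χ, ‖χ - x t‖ ≤ ρ → ‖DF₁ χ t‖ ≤ K) {ω : ℝ}
    (hP : ∀ t ∈ uIoo s σ, ‖p t‖ ≤ P) (he : ∀ t ∈ uIoo s σ, ‖z t - x t‖ ≤ e) (heρ : e ≤ ρ)
    (hω : ∀ t ∈ uIoo s σ, |p t ⬝ᵥ (F₀ (x t) t - F₁ (x t) t)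
      - p s ⬝ᵥ (F₀ (x s) s - F₁ (x s) s)| ≤ ω) :
    |p (max s σ) ⬝ᵥ (z (max s σ) - x (max s σ)) - p (min s σ) ⬝ᵥ (z (min s σ) - x (min s σ))
      - (σ - s) * (p s ⬝ᵥ (F₀ (x s) s - F₁ (x s) s))| ≤ (2 * n * P * K * e + ω) * |σ - s| := by
  have hσr := abs_le.1 hσ
  have hm : s - r ≤ min s σ := le_min (by linarith) (by linarith)
  have hM : max s σ ≤ s + r := max_le (by linarith) (by linarith)
  have hmid : ∀ t ∈ uIoo s σ, t ∈ Icc 0 (s + r) ∧ t ∈ Icc (s - r) T := fun t ht =>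
    ⟨⟨by linarith [ht.1], by linarith [ht.2]⟩, ⟨by linarith [ht.1], by linarith [ht.2]⟩⟩
  have hxx : ∀ t ∈ uIoo s σ, ‖x t - x t‖ ≤ ρ := fun t ht => by
    simpa using (norm_nonneg _).trans ((he t ht).trans heρ)
  have hlip : ∀ t ∈ uIoo s σ,
      ‖F₀ (z t) t - F₀ (x t) t‖ ≤ K * e ∧ ‖F₁ (z t) t - F₁ (x t) t‖ ≤ K * e := fun t ht => by
    obtain ⟨ht₀, ht₁⟩ := hmid t ht
    have hzt := (he t ht).trans heρ
    exact ⟨(hds₀.norm_sub_le ht₀ (hbd₀ t ht₀) hzt (hxx t ht)).trans (by gcongr; exact he t ht),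
      (hds₁.norm_sub_le ht₁ (hbd₁ t ht₁) hzt (hxx t ht)).trans (by gcongr; exact he t ht)⟩
  have hlin : ∀ t ∈ uIoo s σ, ∀ A : (Fin n → ℝ) →L[ℝ] Fin n → ℝ, ‖A‖ ≤ K →
      ‖A (z t - x t)‖ ≤ K * e := fun t ht A hA =>
    (A.le_opNorm _).trans (mul_le_mul hA (he t ht) (norm_nonneg _) hK)
  rcases le_total s σ with hsσ | hσs
  · have hmem : ∀ t ∈ Ioo s σ, t ∈ uIoo s σ := fun t ht => mem_uIoo_of_lt ht.1 ht.2
    rw [max_eq_right hsσ, min_eq_left hsσ, abs_of_nonneg (sub_nonneg.2 hsσ)]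
    simpa using abs_pairing_sub_sub_le_of_le hx hz hpc hpode (by linarith) hsσ (by linarith)
      fun t ht => abs_dotProduct_sub_sub_sub_le (hP t (hmem t ht)) (hlip t (hmem t ht)).1
        (hlin t (hmem t ht) _ (hbd₁ t (hmid t (hmem t ht)).2 _ (hxx t (hmem t ht))))
        (hω t (hmem t ht))
  · have hmem : ∀ t ∈ Ioo σ s, t ∈ uIoo s σ := fun t ht => mem_uIoo_of_gt ht.1 ht.2
    have hstep := abs_pairing_sub_sub_le_of_ge (h := -(p s ⬝ᵥ (F₀ (x s) s - F₁ (x s) s))) hx hz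
      hpc hpode (by linarith) hσs (by linarith) fun t ht =>
        abs_dotProduct_sub_sub_sub_le (ω := ω) (hP t (hmem t ht)) (hlip t (hmem t ht)).2
          (hlin t (hmem t ht) _ (hbd₀ t (hmid t (hmem t ht)).1 _ (hxx t (hmem t ht)))) (by
            rw [← abs_neg]
            convert hω t (hmem t ht) using 2
            simp only [dotProduct_sub]
            ring)
    rw [max_eq_left hσs, min_eq_right hσs, abs_of_nonpos (sub_nonpos.2 hσs)]
    calc _ = |p s ⬝ᵥ (z s - x s) - p σ ⬝ᵥ (z σ - x σ)
          - (s - σ) * -(p s ⬝ᵥ (F₀ (x s) s - F₁ (x s) s))| := by ring_nf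
      _ ≤ _ := hstep.trans_eq (by simp only [Fintype.card_fin]; ring)

theorem abs_pairing_sub_le (hrs : r ≤ s) (hrT : s + r ≤ T) (hσ : |σ - s| ≤ r)
    (hx : IsSwitchTraj T s F₀ F₁ x) (hz : IsSwitchTraj T σ F₀ F₁ z)
    (hpc : ContinuousOn p (Icc 0 T))
    (hpode : ∀ t ∈ Icc 0 T, t ≠ s →
      HasDerivWithinAt p (-(p t ᵥ* jacMat DF₀ DF₁ x s t)) (Icc 0 T) t)
    (hds₀ : DynSmooth n F₀ DF₀ x 0 (s + r) ρ L) (hds₁ : DynSmooth n F₁ DF₁ x (s - r) T ρ L)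
    (hK : 0 ≤ K) (hbd₀ : ∀ t ∈ Icc 0 (s + r), ∀ χ, ‖χ - x t‖ ≤ ρ → ‖DF₀ χ t‖ ≤ K)
    (hbd₁ : ∀ t ∈ Icc (s - r) T, ∀ χ, ‖χ - x t‖ ≤ ρ → ‖DF₁ χ t‖ ≤ K) {ω : ℝ}
    (hP : ∀ t ∈ Icc 0 T, ‖p t‖ ≤ P) (he : ∀ t ∈ Icc 0 T, ‖z t - x t‖ ≤ e) (heρ : e ≤ ρ)
    (hω : ∀ t ∈ uIoo s σ, |p t ⬝ᵥ (F₀ (x t) t - F₁ (x t) t)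
      - p s ⬝ᵥ (F₀ (x s) s - F₁ (x s) s)| ≤ ω) :
    |p T ⬝ᵥ (z T - x T) - p 0 ⬝ᵥ (z 0 - x 0) - (σ - s) * (p s ⬝ᵥ (F₀ (x s) s - F₁ (x s) s))|
      ≤ n * P * max L 0 * e ^ 2 * T + (2 * n * P * K * e + ω) * |σ - s| := by
  set m := min s σ
  set M := max s σ
  have hσr := abs_le.1 hσ
  have hm0 : 0 ≤ m := le_min (by linarith) (by linarith)
  have hM : M ≤ s + r := max_le (by linarith) (by linarith)
  have hmM : m ≤ M := min_le_max
  have hIcc : ∀ {a b}, 0 ≤ a → b ≤ T → Ioo a b ⊆ Icc 0 T := fun ha hb =>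
    Ioo_subset_Icc_self.trans (Icc_subset_Icc ha hb)
  have hbefore := abs_pairing_sub_le_of_le_min hx hz hpc hpode
    (hds₀.mono le_rfl (hmM.trans hM)) le_rfl hm0 le_rfl (by linarith)
    (fun t ht => hP t (hIcc le_rfl (by linarith) ht))
    (fun t ht => he t (hIcc le_rfl (by linarith) ht)) heρ
  have hafter := abs_pairing_sub_le_of_max_le hx hz hpc hpode
    (hds₁.mono (by linarith [le_max_left s σ]) le_rfl) (hm0.trans hmM) le_rfl (by linarith) le_rfl
    (fun t ht => hP t (hIcc (hm0.trans hmM) le_rfl ht))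
    (fun t ht => he t (hIcc (hm0.trans hmM) le_rfl ht)) heρ
  have hbetween := abs_pairing_sub_sub_le_of_uIoo hrs hrT hσ hx hz hpc hpode hds₀ hds₁ hK hbd₀
    hbd₁ (fun t ht => hP t (hIcc hm0 (by linarith) ht))
    (fun t ht => he t (hIcc hm0 (by linarith) ht)) heρ hω
  have hP0 : 0 ≤ P := (norm_nonneg _).trans (hP 0 ⟨le_rfl, by linarith⟩)
  have hTay : 0 ≤ n * P * max L 0 * e ^ 2 := by positivity
  calc _ = |(p m ⬝ᵥ (z m - x m) - p 0 ⬝ᵥ (z 0 - x 0))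
        + (p M ⬝ᵥ (z M - x M) - p m ⬝ᵥ (z m - x m)
          - (σ - s) * (p s ⬝ᵥ (F₀ (x s) s - F₁ (x s) s)))
        + (p T ⬝ᵥ (z T - x T) - p M ⬝ᵥ (z M - x M))| := by ring_nf
    _ ≤ _ := (abs_add_three _ _ _).trans (by nlinarith)

theorem continuousAt_dotProduct_sub_of_dynSmooth (hr : 0 < r) (hrs : r ≤ s) (hrT : s + r ≤ T)
    (hρ : 0 ≤ ρ) (hx : ContinuousOn x (Icc 0 T))
    (hds₀ : DynSmooth n F₀ DF₀ x 0 (s + r) ρ L) (hds₁ : DynSmooth n F₁ DF₁ x (s - r) T ρ L)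
    (hpc : ContinuousOn p (Icc 0 T)) :
    ContinuousAt (fun t => p t ⬝ᵥ (F₀ (x t) t - F₁ (x t) t)) s := by
  have hp := hpc.continuousAt (Icc_mem_nhds (show 0 < s by linarith) (show s < T by linarith))
  have h₀ := (hds₀.continuousOn_along (hx.mono (Icc_subset_Icc le_rfl hrT)) hρ).continuousAt
    (Icc_mem_nhds (show 0 < s by linarith) (show s < s + r by linarith))
  have h₁ := (hds₁.continuousOn_along (hx.mono (Icc_subset_Icc (by linarith) le_rfl))
    hρ).continuousAt (Icc_mem_nhds (show s - r < s by linarith) (show s < T by linarith))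
  exact (continuous_fst.dotProduct continuous_snd).continuousAt.comp (hp.prodMk (h₀.sub h₁))

theorem isLittleO_pairing_sub (hr : 0 < r) (hrs : r ≤ s) (hrT : s + r ≤ T) (hρ : 0 < ρ)
    (hx : IsSwitchTraj T s F₀ F₁ x)
    (hds₀ : DynSmooth n F₀ DF₀ x 0 (s + r) ρ L) (hds₁ : DynSmooth n F₁ DF₁ x (s - r) T ρ L)
    (hpc : ContinuousOn p (Icc 0 T))
    (hpode : ∀ t ∈ Icc 0 T, t ≠ s →
      HasDerivWithinAt p (-(p t ᵥ* jacMat DF₀ DF₁ x s t)) (Icc 0 T) t)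
    {xp : ℝ → ℝ → Fin n → ℝ} {C : ℝ}
    (hxp : ∀ᶠ Δs in 𝓝 0, IsSwitchTraj T (s + Δs) F₀ F₁ (xp Δs))
    (hstab : ∀ᶠ Δs in 𝓝 0, ∀ t ∈ Icc 0 T, ‖xp Δs t - x t‖ ≤ C * |Δs|) :
    (fun Δs => p T ⬝ᵥ (xp Δs T - x T) - p 0 ⬝ᵥ (xp Δs 0 - x 0)
      - Δs * (p s ⬝ᵥ (F₀ (x s) s - F₁ (x s) s))) =o[𝓝 0] fun Δs => Δs := by
  obtain ⟨_, K, -, hK, hbd₀, hbd₁⟩ := exists_bound_of_dynSmooth hrs hrT hx.1 hds₀ hds₁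
  obtain ⟨P, hP⟩ := isCompact_Icc.exists_bound_of_continuousOn hpc
  set H := fun t => p t ⬝ᵥ (F₀ (x t) t - F₁ (x t) t)
  have hH : ContinuousAt H s :=
    continuousAt_dotProduct_sub_of_dynSmooth hr hrs hrT hρ.le hx.1 hds₀ hds₁ hpc
  set A := n * P * max L 0 * C ^ 2 * T + 2 * n * P * K * C
  rw [Asymptotics.isLittleO_iff]
  intro ε hε
  obtain ⟨δ, hδ, hHδ⟩ := Metric.eventually_nhds_iff.1
    (hH.eventually (Metric.closedBall_mem_nhds (H s) (half_pos hε)))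
  filter_upwards [hxp, hstab, eventually_mul_abs_lt 1 (lt_min hδ hr), eventually_mul_abs_lt C hρ,
    eventually_mul_abs_lt A (half_pos hε)] with Δs hz hst hΔ hΔρ hΔA
  rw [one_mul] at hΔ
  have hΔs : |s + Δs - s| = |Δs| := by rw [add_sub_cancel_left]
  have hω : ∀ t ∈ uIoo s (s + Δs), |H t - H s| ≤ ε / 2 := fun t ht => by
    refine hHδ ?_
    rw [Real.dist_eq]
    exact (abs_sub_left_of_mem_uIcc (uIoo_subset_uIcc_self ht)).trans_lt
      (hΔs ▸ hΔ.trans_le (min_le_left _ _))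
  have hbound := abs_pairing_sub_le hrs hrT (hΔs ▸ hΔ.le.trans (min_le_right _ _)) hx hz hpc
    hpode hds₀ hds₁ hK (fun t ht χ hχ => (hbd₀ t ht χ hχ).2) (fun t ht χ hχ => (hbd₁ t ht χ hχ).2)
    hP hst hΔρ.le hω
  rw [hΔs, add_sub_cancel_left] at hbound
  rw [Real.norm_eq_abs, Real.norm_eq_abs]
  calc _ ≤ _ := hbound
    _ = (A * |Δs| + ε / 2) * |Δs| := by ring
    _ ≤ (ε / 2 + ε / 2) * |Δs| := by gcongr
    _ = ε * |Δs| := by ring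

end Switching

theorem objective_derivative_switch_point_general
    {n : ℕ} (T s ρ L : ℝ) (hs : s ∈ Ioo 0 T) (hρ : 0 < ρ)
    (I E : Finset (Fin n))
    (bI bE : Fin n → ℝ)
    (F₀ F₁ : (Fin n → ℝ) → ℝ → Fin n → ℝ)
    (DF₀ DF₁ : (Fin n → ℝ) → ℝ → (Fin n → ℝ) →L[ℝ] (Fin n → ℝ))
    (x : ℝ → Fin n → ℝ)
    -- `x` solves the boundary-value problem with switch point `s`
    (hx : IsSwitchSol T s I E bI bE F₀ F₁ x)
    -- Dynamics Smoothness on the two tubes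
    (hds₀ : DynSmooth n F₀ DF₀ x 0 (s + ρ) ρ L)
    (hds₁ : DynSmooth n F₁ DF₁ x (s - ρ) T ρ L)
    -- the objective `C` is continuously differentiable
    (C : (Fin n → ℝ) → ℝ) (hC : ContDiff ℝ 1 C)
    -- the costate `p`: `ṗ = -p ∇ₓF(x(t),t)` for `t ≠ s`, `p_F(T) = ∇_F C(x(T))`, `p_J(0) = 0`
    (p : ℝ → Fin n → ℝ)
    (hpc : ContinuousOn p (Icc 0 T))
    (hpode : ∀ t ∈ Icc 0 T, t ≠ s →
      HasDerivWithinAt p (-(Matrix.vecMul (p t) (jacMat DF₀ DF₁ x s t))) (Icc 0 T) t)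
    (hpT : ∀ i ∈ Eᶜ, p T i = fderiv ℝ C (x T) (Pi.single i 1))
    (hp0 : ∀ j ∈ Iᶜ, p 0 j = 0)
    -- for each sufficiently small `Δs`, `xp Δs` is a solution of the boundary-value
    -- problem with switch point `s + Δs`, with `‖xp Δs _J(0) - x_J(0)‖ ≤ c|Δs|`
    (xp : ℝ → ℝ → Fin n → ℝ) (c η : ℝ) (hη : 0 < η)
    (hxp : ∀ Δs : ℝ, |Δs| ≤ η →
      IsSwitchSol T (s + Δs) I E bI bE F₀ F₁ (xp Δs) ∧
      ‖(fun j : {j // j ∈ Iᶜ} => xp Δs 0 j.1 - x 0 j.1)‖ ≤ c * |Δs|) :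
    -- the difference quotient of the objective converges, as `Δs → 0`, to
    -- `H₀(x(s),p(s),s) - H₁(x(s),p(s),s) = p(s)⬝[F₀(x(s),s) - F₁(x(s),s)]`
    Tendsto (fun Δs : ℝ => (C (xp Δs T) - C (x T)) / Δs) (𝓝[≠] (0 : ℝ))
      (𝓝 (∑ j, p s j * (F₀ (x s) s j - F₁ (x s) s j))) := by
  obtain ⟨hs0, hsT⟩ := hs
  -- `r` keeps both tubes inside `[0, T]` and leaves room to move the switch time by `|Δs| < r`.
  set r := min ρ (min s (T - s))
  have hr : 0 < r := lt_min hρ (lt_min hs0 (sub_pos.2 hsT))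
  have hrs : r ≤ s := (min_le_right _ _).trans (min_le_left _ _)
  have hrT : s + r ≤ T := by linarith [(min_le_right ρ _).trans (min_le_right s (T - s))]
  have hds₀' := hds₀.mono (b' := s + r) le_rfl (by linarith [min_le_left ρ (min s (T - s))])
  have hds₁' := hds₁.mono (a' := s - r) (by linarith [min_le_left ρ (min s (T - s))]) le_rfl
  have hxp' : ∀ᶠ Δs in 𝓝 (0 : ℝ),
      IsSwitchSol T (s + Δs) I E bI bE F₀ F₁ (xp Δs) ∧ ‖xp Δs 0 - x 0‖ ≤ c * |Δs| := by
    filter_upwards [eventually_mul_abs_lt 1 hη] with Δs hΔ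
    obtain ⟨hsol, hJ⟩ := hxp Δs (by simpa using hΔ.le)
    exact ⟨hsol, (norm_le_norm_restrict_compl fun i hi => by
      simp [hsol.2.2.2.1 i hi, hx.2.2.2.1 i hi]).trans hJ⟩
  obtain ⟨K, hstab⟩ := exists_eventually_norm_sub_le hr hrs hrT hρ hx.isSwitchTraj hds₀' hds₁'
    (hxp'.mono fun _ h => ⟨h.1.isSwitchTraj, h.2⟩)
  have hpair := isLittleO_pairing_sub hr hrs hrT hρ hx.isSwitchTraj hds₀' hds₁' hpc hpode
    (hxp'.mono fun _ h => h.1.isSwitchTraj) hstab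
  have hobj := isLittleO_objective_sub_dotProduct (hC.differentiable one_ne_zero (x T)) hpT
    (hxp'.mono fun _ h i hi => by rw [h.1.2.2.2.2 i hi, hx.2.2.2.2 i hi])
    (hstab.mono fun _ h => h T ⟨(hs0.trans hsT).le, le_rfl⟩)
  change Tendsto _ _ (𝓝 (p s ⬝ᵥ (F₀ (x s) s - F₁ (x s) s)))
  refine tendsto_div_of_isLittleO
    (((hobj.add hpair).congr' ?_ (EventuallyEq.refl _ _)).mono nhdsWithin_le_nhds)
  filter_upwards [hxp'] with Δs h
  rw [dotProduct_sub_eq_zero hp0 fun i hi => by rw [h.1.2.2.2.1 i hi, hx.2.2.2.1 i hi]]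
  ring

/-- Theorem 5.1: derivative of the objective with respect to the
switch point equals the jump in the Hamiltonian at the switch point. -/
theorem objective_derivative_switch_point
    {n : ℕ} (hn : 0 < n) (T s ρ L : ℝ) (hT : 0 < T) (hs : s ∈ Ioo 0 T) (hρ : 0 < ρ)
    (I E : Finset (Fin n)) (hcard : I.card + E.card = n)
    (bI bE : Fin n → ℝ)
    (F₀ F₁ : (Fin n → ℝ) → ℝ → Fin n → ℝ)
    (DF₀ DF₁ : (Fin n → ℝ) → ℝ → (Fin n → ℝ) →L[ℝ] (Fin n → ℝ))
    (x : ℝ → Fin n → ℝ)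
    -- `x` solves the boundary-value problem with switch point `s`
    (hx : IsSwitchSol T s I E bI bE F₀ F₁ x)
    -- Dynamics Smoothness on the two tubes
    (hds₀ : DynSmooth n F₀ DF₀ x 0 (s + ρ) ρ L)
    (hds₁ : DynSmooth n F₁ DF₁ x (s - ρ) T ρ L)
    -- the objective `C` is continuously differentiable
    (C : (Fin n → ℝ) → ℝ) (hC : ContDiff ℝ 1 C)
    -- the fundamental matrix `Φ` of the linearized state dynamics along `x`,
    -- with `Φ_{EJ}(T)` invertible (`J = Iᶜ`)
    (Φ : ℝ → (Fin n → ℝ) →L[ℝ] (Fin n → ℝ))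
    (hΦc : ContinuousOn Φ (Icc 0 T))
    (hΦ0 : Φ 0 = ContinuousLinearMap.id ℝ (Fin n → ℝ))
    (hΦode : ∀ t ∈ Icc 0 T, t ≠ s → HasDerivWithinAt Φ
      ((if t < s then DF₀ (x t) t else DF₁ (x t) t).comp (Φ t)) (Icc 0 T) t)
    (N : Matrix {j // j ∈ Iᶜ} {e // e ∈ E} ℝ)
    (hN₁ : (LinearMap.toMatrix' (Φ T : (Fin n → ℝ) →ₗ[ℝ] Fin n → ℝ)).submatrix
        (Subtype.val : {e // e ∈ E} → Fin n) (Subtype.val : {j // j ∈ Iᶜ} → Fin n) * N = 1)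
    (hN₂ : N * (LinearMap.toMatrix' (Φ T : (Fin n → ℝ) →ₗ[ℝ] Fin n → ℝ)).submatrix
        (Subtype.val : {e // e ∈ E} → Fin n) (Subtype.val : {j // j ∈ Iᶜ} → Fin n) = 1)
    -- the fundamental matrix `Ψ` of the costate dynamics, `Ψ̇ = -∇ₓF(x(t),t)ᵀ Ψ`,
    -- with `Ψ_{FI}(T)` invertible (`F = Eᶜ`)
    (Ψ : ℝ → Matrix (Fin n) (Fin n) ℝ)
    (hΨc : ∀ i j, ContinuousOn (fun τ => Ψ τ i j) (Icc 0 T))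
    (hΨ0 : Ψ 0 = 1)
    (hΨode : ∀ t ∈ Icc 0 T, t ≠ s → ∀ i j, HasDerivWithinAt (fun τ => Ψ τ i j)
      ((-((jacMat DF₀ DF₁ x s t).transpose * Ψ t)) i j) (Icc 0 T) t)
    (M : Matrix {i // i ∈ I} {f // f ∈ Eᶜ} ℝ)
    (hM₁ : (Ψ T).submatrix
        (Subtype.val : {f // f ∈ Eᶜ} → Fin n) (Subtype.val : {i // i ∈ I} → Fin n) * M = 1)
    (hM₂ : M * (Ψ T).submatrix
        (Subtype.val : {f // f ∈ Eᶜ} → Fin n) (Subtype.val : {i // i ∈ I} → Fin n) = 1)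
    -- the costate `p`: `ṗ = -p ∇ₓF(x(t),t)` for `t ≠ s`, `p_F(T) = ∇_F C(x(T))`, `p_J(0) = 0`
    (p : ℝ → Fin n → ℝ)
    (hpc : ContinuousOn p (Icc 0 T))
    (hpode : ∀ t ∈ Icc 0 T, t ≠ s →
      HasDerivWithinAt p (-(Matrix.vecMul (p t) (jacMat DF₀ DF₁ x s t))) (Icc 0 T) t)
    (hpT : ∀ i ∈ Eᶜ, p T i = fderiv ℝ C (x T) (Pi.single i 1))
    (hp0 : ∀ j ∈ Iᶜ, p 0 j = 0)
    -- for each sufficiently small `Δs`, `xp Δs` is a solution of the boundary-value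
    -- problem with switch point `s + Δs`, with `‖xp Δs _J(0) - x_J(0)‖ ≤ c|Δs|`
    (xp : ℝ → ℝ → Fin n → ℝ) (c η : ℝ) (hη : 0 < η)
    (hxp : ∀ Δs : ℝ, |Δs| ≤ η →
      IsSwitchSol T (s + Δs) I E bI bE F₀ F₁ (xp Δs) ∧
      ‖(fun j : {j // j ∈ Iᶜ} => xp Δs 0 j.1 - x 0 j.1)‖ ≤ c * |Δs|) :
    -- the difference quotient of the objective converges, as `Δs → 0`, to
    -- `H₀(x(s),p(s),s) - H₁(x(s),p(s),s) = p(s)⬝[F₀(x(s),s) - F₁(x(s),s)]`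
    Tendsto (fun Δs : ℝ => (C (xp Δs T) - C (x T)) / Δs) (𝓝[≠] (0 : ℝ))
      (𝓝 (∑ j, p s j * (F₀ (x s) s j - F₁ (x s) s j))) :=
  objective_derivative_switch_point_general T s ρ L hs hρ I E bI bE F₀ F₁ DF₀ DF₁ x hx hds₀ hds₁ C
    hC p hpc hpode hpT hp0 xp c η hη hxp
end

section
/- Assume Dynamics Smoothness holds. Let Δs ∈ (0, ρ] and let x⁺ : [0,T] → ℝⁿ be a solution of the boundary-value problem with switch point s + Δs (ẋ⁺ = F₀(x⁺,t) on [0, s+Δs), ẋ⁺ = F₁(x⁺,t) on (s+Δs, T], x⁺_I(0) = b_I, x⁺_E(T) = b_E) such that θ := x⁺_J(0) − x_J(0) satisfies ‖θ‖ ≤ c₀Δs for a constant c₀, ‖x⁺(t) − x(t)‖ ≤ κΔs for all t ∈ [0,T], and x⁺ remains in the tubes T₀, T₁ on the corresponding time intervals. Let Z be the unique solution of: Ż(t) = ∇ₓF₀(x(t),t)Z(t) on [0,s) with Z_I(0) = 0, Z_J(0) = θ; the jump update Z(s+Δs) = Z(s) + Δs[F₀(x(s),s) − F₁(x(s),s)];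 and Ż(t) = ∇ₓF₁(x(t),t)Z(t) on (s+Δs, T]. Then there is a constant C, independent of Δs, such that ‖x⁺(t) − x(t) − Z(t)‖ ≤ C|Δs|² for all t ∈ [0,s] ∪ [s+Δs, T], for all sufficiently small Δs > 0. -/
/-!
Write `w = x⁺ - x - Z`. Away from the switch points `w` solves
`ẇ = [F(x⁺) - F(x) - ∇ₓF(x) (x⁺ - x)] + ∇ₓF(x) w`, and the bracket is `O(‖x⁺ - x‖²) = O(Δs²)`
because `∇ₓF` is Lipschitz on the tube; Grönwall's inequality therefore keeps `w = O(Δs²)` on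
`[0, s]`, where `w(0) = 0`, and propagates an `O(Δs²)` bound at `s + Δs` to `[s + Δs, T]`.
On `[s, s + Δs]` the trajectory `x⁺` still follows `F₀` while `x` already follows `F₁`, and both
fields stay within `O(Δs)` of their values at `(x(s), s)`, so `x⁺ - x` grows by
`Δs (F₀ - F₁)(x(s), s) + O(Δs²)`: up to `O(Δs²)` this is the jump imposed on `Z`.
-/

open Set Metric

open Real
open scoped NNReal

section

variable {E : Type*} [NormedAddCommGroup E] [NormedSpace ℝ E]

theorem gronwallBound_le_mul_exp {δ K ε x : ℝ} (hK : 0 ≤ K) (hε : 0 ≤ ε) :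
    gronwallBound δ K ε x ≤ (δ + ε * x) * exp (K * x) := by
  rcases hK.eq_or_lt with rfl | hK
  · simp [gronwallBound_K0]
  rw [gronwallBound_of_K_ne_0 hK.ne']
  -- `exp y - 1 ≤ y * exp y` is `1 - y ≤ exp (-y)` multiplied by `exp y`
  have key : exp (K * x) - 1 ≤ K * x * exp (K * x) := by
    have := mul_le_mul_of_nonneg_right (one_sub_le_exp_neg (K * x)) (exp_pos (K * x)).le
    rw [← exp_add, neg_add_cancel, exp_zero] at this
    linarith
  calc δ * exp (K * x) + ε / K * (exp (K * x) - 1)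
      ≤ δ * exp (K * x) + ε / K * (K * x * exp (K * x)) := by gcongr
    _ = (δ + ε * x) * exp (K * x) := by field_simp

theorem HasDerivWithinAt.Ici_of_Icc {f : ℝ → E} {f' : E} {a b t : ℝ}
    (h : HasDerivWithinAt f f' (Icc a b) t) (ht : t ∈ Ico a b) :
    HasDerivWithinAt f f' (Ici t) t :=
  h.mono_of_mem_nhdsWithin (Icc_mem_nhdsGE_of_mem ht)

theorem norm_le_of_norm_deriv_le_Ioo {f f' : ℝ → E} {δ K ε a b : ℝ} (hK : 0 ≤ K) (hε : 0 ≤ ε)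
    (hf : ContinuousOn f (Icc a b)) (hf' : ∀ t ∈ Ioo a b, HasDerivWithinAt f (f' t) (Ici t) t)
    (bound : ∀ t ∈ Ioo a b, ‖f' t‖ ≤ K * ‖f t‖ + ε) (ha : ‖f a‖ ≤ δ) :
    ∀ t ∈ Icc a b, ‖f t‖ ≤ (δ + ε * (t - a)) * exp (K * (t - a)) := by
  rintro t ⟨hat, htb⟩
  have hG : ‖f t‖ ≤ (‖f a‖ + ε * (t - a)) * exp (K * (t - a)) := by
    rcases hat.eq_or_lt with rfl | hat
    · simp
    -- Grönwall on `[a', t]` for every `a' ∈ (a, t)`, then let `a' → a`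
    have hfa : ContinuousWithinAt f (Ioo a t) a :=
      (hf a ⟨le_rfl, hat.le.trans htb⟩).mono fun y hy => ⟨hy.1.le, hy.2.le.trans htb⟩
    refine continuousWithinAt_const.closure_le (s := Ioo a t)
      (g := fun a' => (‖f a'‖ + ε * (t - a')) * exp (K * (t - a')))
      (by rw [closure_Ioo hat.ne]; exact ⟨le_rfl, hat.le⟩) (by fun_prop) fun a' ha' => ?_
    have hsub : Icc a' t ⊆ Icc a b := Icc_subset_Icc ha'.1.le htb
    have hsub' : Ico a' t ⊆ Ioo a b := fun r hr => ⟨ha'.1.trans_le hr.1, hr.2.trans_le htb⟩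
    calc ‖f t‖ ≤ gronwallBound ‖f a'‖ K ε (t - a') :=
          norm_le_gronwallBound_of_norm_deriv_right_le (hf.mono hsub)
            (fun r hr => hf' r (hsub' hr)) le_rfl (fun r hr => bound r (hsub' hr))
            t ⟨ha'.2.le, le_rfl⟩
      _ ≤ _ := gronwallBound_le_mul_exp hK hε
  exact hG.trans (by gcongr)

theorem norm_image_sub_sub_smul_le_Ioo {f f' : ℝ → E} {v : E} {C a b : ℝ} (hC : 0 ≤ C)
    (hf : ContinuousOn f (Icc a b)) (hf' : ∀ t ∈ Ioo a b, HasDerivWithinAt f (f' t) (Ici t) t)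
    (bound : ∀ t ∈ Ioo a b, ‖f' t - v‖ ≤ C) :
    ∀ t ∈ Icc a b, ‖f t - f a - (t - a) • v‖ ≤ C * (t - a) := by
  intro t ht
  have hg : ContinuousOn (fun t => f t - f a - (t - a) • v) (Icc a b) := by fun_prop
  have hg' : ∀ t ∈ Ioo a b, HasDerivWithinAt (fun t => f t - f a - (t - a) • v)
      (f' t - v) (Ici t) t := fun t ht => by
    have hv := ((hasDerivWithinAt_id t (Ici t)).sub_const a).smul_const v
    rw [one_smul] at hv
    exact ((hf' t ht).sub_const (f a)).sub hv
  simpa using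
    norm_le_of_norm_deriv_le_Ioo (δ := 0) le_rfl hC hg hg' (by simpa using bound) (by simp) t ht

theorem norm_increment_sub_smul_le {F₀ F₁ : E → ℝ → E} {x y : ℝ → E} {s Δ R c : ℝ}
    {K₀ K₁ : ℝ≥0} (hΔ : 0 ≤ Δ) (hcR : c * Δ ≤ R)
    (hF₀ : LipschitzOnWith K₀ (fun p : E × ℝ => F₀ p.1 p.2) (closedBall (x s) R ×ˢ Icc s (s + Δ)))
    (hF₁ : LipschitzOnWith K₁ (fun t => F₁ (x t) t) (Icc s (s + Δ)))
    (hy : ContinuousOn y (Icc s (s + Δ))) (hx : ContinuousOn x (Icc s (s + Δ)))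
    (hy' : ∀ t ∈ Ioo s (s + Δ), HasDerivWithinAt y (F₀ (y t) t) (Ici t) t)
    (hx' : ∀ t ∈ Ioo s (s + Δ), HasDerivWithinAt x (F₁ (x t) t) (Ici t) t)
    (hnear : ∀ t ∈ Icc s (s + Δ), ‖y t - x s‖ ≤ c * Δ) :
    ‖y (s + Δ) - x (s + Δ) - (y s - x s) - Δ • (F₀ (x s) s - F₁ (x s) s)‖
      ≤ (K₀ * (c + 1) + K₁) * Δ ^ 2 := by
  have hcΔ : 0 ≤ c * Δ := (norm_nonneg _).trans (hnear s ⟨le_rfl, by linarith⟩)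
  have hbound : ∀ t ∈ Ioo s (s + Δ), ‖F₀ (y t) t - F₁ (x t) t - (F₀ (x s) s - F₁ (x s) s)‖
      ≤ (K₀ * (c + 1) + K₁) * Δ := by
    intro t ht
    have ht' : t ∈ Icc s (s + Δ) := Ioo_subset_Icc_self ht
    have hts : |t - s| ≤ Δ := by rw [abs_of_nonneg (by linarith [ht.1])]; linarith [ht.2]
    have h₀ : ‖F₀ (y t) t - F₀ (x s) s‖ ≤ K₀ * ((c + 1) * Δ) := by
      rw [← dist_eq_norm]
      refine (hF₀.dist_le_mul (y t, t) ⟨mem_closedBall_iff_norm.2 ((hnear t ht').trans hcR), ht'⟩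
        (x s, s) ⟨mem_closedBall_self (hcΔ.trans hcR), le_rfl, by linarith⟩).trans
        (mul_le_mul_of_nonneg_left ?_ K₀.2)
      rw [Prod.dist_eq, dist_eq_norm, Real.dist_eq, max_le_iff]
      exact ⟨by linarith [hnear t ht'], by linarith⟩
    have h₁ : ‖F₁ (x t) t - F₁ (x s) s‖ ≤ K₁ * Δ := by
      rw [← dist_eq_norm]
      exact (hF₁.dist_le_mul t ht' s ⟨le_rfl, by linarith⟩).trans
        (mul_le_mul_of_nonneg_left (by rwa [Real.dist_eq]) K₁.2)
    calc ‖F₀ (y t) t - F₁ (x t) t - (F₀ (x s) s - F₁ (x s) s)‖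
        = ‖(F₀ (y t) t - F₀ (x s) s) - (F₁ (x t) t - F₁ (x s) s)‖ := by congr 1; abel
      _ ≤ ‖F₀ (y t) t - F₀ (x s) s‖ + ‖F₁ (x t) t - F₁ (x s) s‖ := norm_sub_le _ _
      _ ≤ (K₀ * (c + 1) + K₁) * Δ := by rw [add_mul, mul_assoc]; exact add_le_add h₀ h₁
  have hC : 0 ≤ (K₀ * (c + 1) + K₁) * Δ := by
    rw [add_mul, mul_assoc]
    exact add_nonneg (mul_nonneg K₀.2 (by linarith)) (mul_nonneg K₁.2 hΔ)
  have key := norm_image_sub_sub_smul_le_Ioo (f := y - x) hC (hy.sub hx)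
    (fun t ht => (hy' t ht).sub (hx' t ht)) hbound (s + Δ) ⟨by linarith, le_rfl⟩
  simpa [sq, mul_assoc] using key

end

namespace DynSmooth

variable {n : ℕ} {Fd : (Fin n → ℝ) → ℝ → Fin n → ℝ}
  {DFd : (Fin n → ℝ) → ℝ → (Fin n → ℝ) →L[ℝ] (Fin n → ℝ)} {x : ℝ → Fin n → ℝ} {a b ρ L : ℝ}

theorem norm_sub_sub_apply_sub_le (hds : DynSmooth n Fd DFd x a b ρ L) {t : ℝ}
    (ht : t ∈ Icc a b) {χ₁ χ₂ : Fin n → ℝ} (h₁ : ‖χ₁ - x t‖ ≤ ρ) (h₂ : ‖χ₂ - x t‖ ≤ ρ) :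
    ‖Fd χ₁ t - Fd χ₂ t - DFd χ₂ t (χ₁ - χ₂)‖ ≤ |L| * ‖χ₁ - χ₂‖ ^ 2 := by
  set S := closedBall (x t) ρ ∩ closedBall χ₂ ‖χ₁ - χ₂‖
  have hS₁ : χ₁ ∈ S := ⟨mem_closedBall_iff_norm.2 h₁, mem_closedBall_iff_norm.2 le_rfl⟩
  have hS₂ : χ₂ ∈ S := ⟨mem_closedBall_iff_norm.2 h₂, mem_closedBall_self (norm_nonneg _)⟩
  have hderiv : ∀ y ∈ S, HasFDerivWithinAt (fun y => Fd y t) (DFd y t) S y := fun y hy =>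
    (hds.hasFDeriv y t ht (mem_closedBall_iff_norm.1 hy.1)).hasFDerivWithinAt
  have hbound : ∀ y ∈ S, ‖DFd y t - DFd χ₂ t‖ ≤ |L| * ‖χ₁ - χ₂‖ := fun y hy =>
    calc ‖DFd y t - DFd χ₂ t‖ ≤ L * ‖y - χ₂‖ :=
          hds.lip t y χ₂ ht (mem_closedBall_iff_norm.1 hy.1) h₂
      _ ≤ |L| * ‖χ₁ - χ₂‖ :=
          (mul_le_mul_of_nonneg_right (le_abs_self L) (norm_nonneg _)).trans
            (mul_le_mul_of_nonneg_left (mem_closedBall_iff_norm.1 hy.2) (abs_nonneg L))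
  have := ((convex_closedBall _ _).inter
    (convex_closedBall _ _)).norm_image_sub_le_of_norm_hasFDerivWithin_le' hderiv hbound hS₂ hS₁
  rwa [mul_assoc, ← sq] at this

theorem exists_bound_along (hds : DynSmooth n Fd DFd x a b ρ L) {c d : ℝ}
    (hcd : Icc c d ⊆ Icc a b) (hx : ContinuousOn x (Icc c d)) (hρ : 0 ≤ ρ) :
    ∃ M, 0 ≤ M ∧ ∀ t ∈ Icc c d, ‖DFd (x t) t‖ ≤ M := by
  have hcont : ContinuousOn (fun t => DFd (x t) t) (Icc c d) :=
    hds.contDeriv.comp (hx.prodMk continuousOn_id) fun t ht => ⟨hcd ht, by simpa using hρ⟩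
  obtain ⟨M, hM⟩ := isCompact_Icc.exists_bound_of_continuousOn hcont
  exact ⟨max M 0, le_max_right _ _, fun t ht => (hM t ht).trans (le_max_left _ _)⟩

theorem norm_sub_sub_le_of_linearized (hds : DynSmooth n Fd DFd x a b ρ L)
    {c d M r δ : ℝ} {y Z : ℝ → Fin n → ℝ} (hcd : Icc c d ⊆ Icc a b) (hM : 0 ≤ M)
    (hDF : ∀ t ∈ Icc c d, ‖DFd (x t) t‖ ≤ M)
    (hy : ContinuousOn y (Icc c d)) (hx : ContinuousOn x (Icc c d))
    (hZ : ContinuousOn Z (Icc c d))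
    (hy' : ∀ t ∈ Ioo c d, HasDerivWithinAt y (Fd (y t) t) (Ici t) t)
    (hx' : ∀ t ∈ Ioo c d, HasDerivWithinAt x (Fd (x t) t) (Ici t) t)
    (hZ' : ∀ t ∈ Ioo c d, HasDerivWithinAt Z (DFd (x t) t (Z t)) (Ici t) t)
    (hyρ : ∀ t ∈ Icc c d, ‖y t - x t‖ ≤ ρ) (hyr : ∀ t ∈ Icc c d, ‖y t - x t‖ ≤ r)
    (hδ : ‖y c - x c - Z c‖ ≤ δ) :
    ∀ t ∈ Icc c d, ‖y t - x t - Z t‖ ≤ (δ + |L| * r ^ 2 * (d - c)) * exp (M * (d - c)) := by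
  have hrem : ∀ t ∈ Ioo c d, ‖Fd (y t) t - Fd (x t) t - DFd (x t) t (Z t)‖
      ≤ M * ‖y t - x t - Z t‖ + |L| * r ^ 2 := by
    intro t ht
    have ht' := Ioo_subset_Icc_self ht
    have hxρ : ‖x t - x t‖ ≤ ρ := by simpa using (norm_nonneg _).trans (hyρ t ht')
    have hr : ‖y t - x t‖ ^ 2 ≤ r ^ 2 := pow_le_pow_left₀ (norm_nonneg _) (hyr t ht') 2
    calc ‖Fd (y t) t - Fd (x t) t - DFd (x t) t (Z t)‖
        = ‖(Fd (y t) t - Fd (x t) t - DFd (x t) t (y t - x t))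
            + DFd (x t) t (y t - x t - Z t)‖ := by simp only [map_sub]; abel_nf
      _ ≤ |L| * ‖y t - x t‖ ^ 2 + M * ‖y t - x t - Z t‖ :=
          norm_add_le_of_le (hds.norm_sub_sub_apply_sub_le (hcd ht') (hyρ t ht') hxρ)
            ((DFd (x t) t).le_of_opNorm_le (hDF t ht') _)
      _ ≤ M * ‖y t - x t - Z t‖ + |L| * r ^ 2 := by
          linarith [mul_le_mul_of_nonneg_left hr (abs_nonneg L)]
  rintro t ⟨hct, htd⟩
  have hδ0 : 0 ≤ δ := (norm_nonneg _).trans hδ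
  have hdc : 0 ≤ d - c := by linarith
  refine (norm_le_of_norm_deriv_le_Ioo hM (by positivity) ((hy.sub hx).sub hZ)
    (fun t ht => ((hy' t ht).sub (hx' t ht)).sub (hZ' t ht)) hrem hδ t ⟨hct, htd⟩).trans ?_
  gcongr

end DynSmooth

namespace IsSwitchSol

variable {n : ℕ} {T σ : ℝ} {I E : Finset (Fin n)} {bI bE : Fin n → ℝ}
  {F₀ F₁ : (Fin n → ℝ) → ℝ → Fin n → ℝ} {y : ℝ → Fin n → ℝ}

theorem hasDerivWithinAt_Ici_of_lt (h : IsSwitchSol T σ I E bI bE F₀ F₁ y) (hσT : σ ≤ T)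
    {t : ℝ} (ht : t ∈ Ioo 0 σ) : HasDerivWithinAt y (F₀ (y t) t) (Ici t) t :=
  (h.2.1 t ⟨ht.1.le, ht.2⟩).Ici_of_Icc ⟨ht.1.le, ht.2.trans_le hσT⟩

theorem hasDerivWithinAt_Ici_of_gt (h : IsSwitchSol T σ I E bI bE F₀ F₁ y) (hσ : 0 ≤ σ)
    {t : ℝ} (ht : t ∈ Ioo σ T) : HasDerivWithinAt y (F₁ (y t) t) (Ici t) t :=
  (h.2.2.1 t ⟨ht.1, ht.2.le⟩).Ici_of_Icc ⟨hσ.trans ht.1.le, ht.2⟩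

theorem norm_sub_sub_le_before_switch {s b ρ L M r : ℝ} {x Z : ℝ → Fin n → ℝ}
    {DF₀ : (Fin n → ℝ) → ℝ → (Fin n → ℝ) →L[ℝ] (Fin n → ℝ)}
    (hy : IsSwitchSol T σ I E bI bE F₀ F₁ y) (hx : IsSwitchSol T s I E bI bE F₀ F₁ x)
    (hsσ : s ≤ σ) (hσT : σ ≤ T) (hds : DynSmooth n F₀ DF₀ x 0 b ρ L) (hsb : s ≤ b) (hM : 0 ≤ M)
    (hDF : ∀ t ∈ Icc 0 s, ‖DF₀ (x t) t‖ ≤ M) (hZ : ContinuousOn Z (Icc 0 s))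
    (hZ' : ∀ t ∈ Ico 0 s, HasDerivWithinAt Z (DF₀ (x t) t (Z t)) (Icc 0 s) t)
    (hZI : ∀ i ∈ I, Z 0 i = 0) (hZJ : ∀ j : {j // j ∈ Iᶜ}, Z 0 j.1 = y 0 j.1 - x 0 j.1)
    (hyρ : ∀ t ∈ Icc 0 T, ‖y t - x t‖ ≤ ρ) (hyr : ∀ t ∈ Icc 0 T, ‖y t - x t‖ ≤ r) :
    ∀ t ∈ Icc 0 s, ‖y t - x t - Z t‖ ≤ |L| * r ^ 2 * s * exp (M * s) := by
  have hsub : Icc 0 s ⊆ Icc 0 T := Icc_subset_Icc le_rfl (hsσ.trans hσT)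
  have hw0 : y 0 - x 0 - Z 0 = 0 := by
    funext i
    by_cases hi : i ∈ I
    · simp [hy.2.2.2.1 i hi, hx.2.2.2.1 i hi, hZI i hi]
    · simp [hZJ ⟨i, Finset.mem_compl.2 hi⟩]
  intro t ht
  refine (hds.norm_sub_sub_le_of_linearized (δ := 0) (Icc_subset_Icc le_rfl hsb) hM hDF
    (hy.1.mono hsub) (hx.1.mono hsub) hZ
    (fun t ht => hy.hasDerivWithinAt_Ici_of_lt hσT ⟨ht.1, ht.2.trans_le hsσ⟩)
    (fun t ht => hx.hasDerivWithinAt_Ici_of_lt (hsσ.trans hσT) ht)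
    (fun t ht => (hZ' t (Ioo_subset_Ico_self ht)).Ici_of_Icc (Ioo_subset_Ico_self ht))
    (fun t ht => hyρ t (hsub ht)) (fun t ht => hyr t (hsub ht)) (by simp [hw0]) t ht).trans_eq ?_
  simp only [sub_zero, zero_add]

theorem norm_sub_sub_le_after_switch {s a ρ L M r δ : ℝ} {x Z : ℝ → Fin n → ℝ}
    {DF₁ : (Fin n → ℝ) → ℝ → (Fin n → ℝ) →L[ℝ] (Fin n → ℝ)}
    (hy : IsSwitchSol T σ I E bI bE F₀ F₁ y) (hx : IsSwitchSol T s I E bI bE F₀ F₁ x)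
    (hs : 0 ≤ s) (hsσ : s ≤ σ) (hds : DynSmooth n F₁ DF₁ x a T ρ L) (haσ : a ≤ σ) (hM : 0 ≤ M)
    (hDF : ∀ t ∈ Icc σ T, ‖DF₁ (x t) t‖ ≤ M) (hZ : ContinuousOn Z (Icc σ T))
    (hZ' : ∀ t ∈ Ioc σ T, HasDerivWithinAt Z (DF₁ (x t) t (Z t)) (Icc σ T) t)
    (hyρ : ∀ t ∈ Icc 0 T, ‖y t - x t‖ ≤ ρ) (hyr : ∀ t ∈ Icc 0 T, ‖y t - x t‖ ≤ r)
    (hδ : ‖y σ - x σ - Z σ‖ ≤ δ) :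
    ∀ t ∈ Icc σ T, ‖y t - x t - Z t‖ ≤ (δ + |L| * r ^ 2 * T) * exp (M * T) := by
  have hsub : Icc σ T ⊆ Icc 0 T := Icc_subset_Icc (hs.trans hsσ) le_rfl
  intro t ht
  refine (hds.norm_sub_sub_le_of_linearized (Icc_subset_Icc haσ le_rfl) hM hDF
    (hy.1.mono hsub) (hx.1.mono hsub) hZ
    (fun t ht => hy.hasDerivWithinAt_Ici_of_gt (hs.trans hsσ) ht)
    (fun t ht => hx.hasDerivWithinAt_Ici_of_gt hs ⟨hsσ.trans_lt ht.1, ht.2⟩)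
    (fun t ht => (hZ' t (Ioo_subset_Ioc_self ht)).Ici_of_Icc ⟨ht.1.le, ht.2⟩)
    (fun t ht => hyρ t (hsub ht)) (fun t ht => hyr t (hsub ht)) hδ t ht).trans ?_
  have hδ0 : 0 ≤ δ := (norm_nonneg _).trans hδ
  have hT : 0 ≤ T := hs.trans (hsσ.trans (ht.1.trans ht.2))
  gcongr <;> linarith

theorem norm_sub_le_mul_sub_after_switch (h : IsSwitchSol T σ I E bI bE F₀ F₁ y) (hσ : 0 ≤ σ)
    {b M : ℝ} (hbT : b ≤ T) (hM0 : 0 ≤ M) (hM : ∀ t ∈ Ioo σ b, ‖F₁ (y t) t‖ ≤ M) :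
    ∀ t ∈ Icc σ b, ‖y t - y σ‖ ≤ M * (t - σ) := by
  simpa using norm_image_sub_sub_smul_le_Ioo (v := 0) hM0 (h.1.mono (Icc_subset_Icc hσ hbT))
    (fun t ht => h.hasDerivWithinAt_Ici_of_gt hσ ⟨ht.1, ht.2.trans_le hbT⟩) (by simpa using hM)

theorem exists_jump_bound {s ρ κ : ℝ} {x : ℝ → Fin n → ℝ}
    (hx : IsSwitchSol T s I E bI bE F₀ F₁ x) (hs : s ∈ Ioo 0 T) (hρ : 0 < ρ)
    (hF₀ : ContDiffOn ℝ 1 (fun p : (Fin n → ℝ) × ℝ => F₀ p.1 p.2)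
      {p : (Fin n → ℝ) × ℝ | p.2 ∈ Icc 0 (s + ρ) ∧ ‖p.1 - x p.2‖ ≤ ρ})
    (hψ : ContDiffOn ℝ 1 (fun t => F₁ (x t) t) (Icc s (s + ρ))) :
    ∃ C, ∃ η > 0, s + η < T ∧ ∀ Δs, 0 < Δs → Δs ≤ η → ∀ xp : ℝ → Fin n → ℝ,
      IsSwitchSol T (s + Δs) I E bI bE F₀ F₁ xp → (∀ t ∈ Icc 0 T, ‖xp t - x t‖ ≤ κ * Δs) →
      ‖xp (s + Δs) - x (s + Δs) - (xp s - x s) - Δs • (F₀ (x s) s - F₁ (x s) s)‖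
        ≤ C * Δs ^ 2 := by
  obtain ⟨hs0, hsT⟩ := hs
  obtain ⟨K₁, hK₁⟩ := hψ.exists_lipschitzOnWith one_ne_zero (convex_Icc _ _) isCompact_Icc
  obtain ⟨Mψ, hMψ⟩ := isCompact_Icc.exists_bound_of_continuousOn hψ.continuousOn
  have hMψ0 : 0 ≤ Mψ := (norm_nonneg _).trans (hMψ s ⟨le_rfl, by linarith⟩)
  set c := |κ| + Mψ
  have hc : 0 ≤ c := add_nonneg (abs_nonneg κ) hMψ0
  -- `η` is small enough for the box of radius `ρ / 2` around `(x s, s)` to lie in the tube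
  -- and to contain `(xp t, t)` for `t ∈ [s, s + Δs]`
  set η := min ((T - s) / 2) (ρ / (2 * (c + 1)))
  have hη : 0 < η := lt_min (by linarith) (by positivity)
  have hηT : s + η < T := by linarith [min_le_left ((T - s) / 2) (ρ / (2 * (c + 1)))]
  have hηρ : (c + 1) * η ≤ ρ / 2 := by
    have := min_le_right ((T - s) / 2) (ρ / (2 * (c + 1)))
    rw [le_div_iff₀ (by positivity)] at this
    linarith
  have hspeed := hx.norm_sub_le_mul_sub_after_switch hs0.le hηT.le hMψ0
    fun t ht => hMψ t ⟨ht.1.le, by nlinarith [ht.2]⟩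
  have hB : closedBall (x s) (ρ / 2) ×ˢ Icc s (s + η)
      ⊆ {p : (Fin n → ℝ) × ℝ | p.2 ∈ Icc 0 (s + ρ) ∧ ‖p.1 - x p.2‖ ≤ ρ} := by
    rintro ⟨χ, t⟩ ⟨hχ, ht⟩
    refine ⟨⟨by linarith [ht.1], by nlinarith [ht.2]⟩, ?_⟩
    calc ‖χ - x t‖ ≤ ‖χ - x s‖ + ‖x t - x s‖ := by
          rw [norm_sub_rev (x t)]; exact norm_sub_le_norm_sub_add_norm_sub ..
      _ ≤ ρ / 2 + Mψ * η := add_le_add (mem_closedBall_iff_norm.1 hχ)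
          ((hspeed t ht).trans (by gcongr; linarith [ht.2]))
      _ ≤ ρ := by nlinarith [abs_nonneg κ]
  obtain ⟨K₀, hK₀⟩ := (hF₀.mono hB).exists_lipschitzOnWith one_ne_zero
    ((convex_closedBall _ _).prod (convex_Icc _ _)) ((isCompact_closedBall _ _).prod isCompact_Icc)
  refine ⟨K₀ * (c + 1) + K₁, η, hη, hηT, fun Δs hΔ hΔη xp hxp hκ => ?_⟩
  have hΔT : s + Δs ≤ T := by linarith
  have hsub : Icc s (s + Δs) ⊆ Icc 0 T := Icc_subset_Icc hs0.le hΔT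
  refine norm_increment_sub_smul_le hΔ.le (R := ρ / 2) (by nlinarith)
    (hK₀.mono (prod_mono subset_rfl (Icc_subset_Icc le_rfl (by linarith))))
    (hK₁.mono (Icc_subset_Icc le_rfl (by nlinarith))) (hxp.1.mono hsub) (hx.1.mono hsub)
    (fun t ht => hxp.hasDerivWithinAt_Ici_of_lt hΔT ⟨by linarith [ht.1], ht.2⟩)
    (fun t ht => hx.hasDerivWithinAt_Ici_of_gt hs0.le ⟨ht.1, by linarith [ht.2]⟩) fun t ht => ?_
  calc ‖xp t - x s‖ ≤ ‖xp t - x t‖ + ‖x t - x s‖ := norm_sub_le_norm_sub_add_norm_sub ..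
    _ ≤ |κ| * Δs + Mψ * Δs := add_le_add ((hκ t (hsub ht)).trans (by gcongr; exact le_abs_self κ))
        ((hspeed t ⟨ht.1, by linarith [ht.2]⟩).trans (by gcongr; linarith [ht.2]))
    _ = c * Δs := by ring

end IsSwitchSol

theorem switch_point_linearization_quadratic_error_general
    {n : ℕ} (T s ρ L c₀ κ : ℝ) (hs : s ∈ Ioo 0 T) (hρ : 0 < ρ)
    (I E : Finset (Fin n))
    (bI bE : Fin n → ℝ)
    (F₀ F₁ : (Fin n → ℝ) → ℝ → Fin n → ℝ)
    (DF₀ DF₁ : (Fin n → ℝ) → ℝ → (Fin n → ℝ) →L[ℝ] (Fin n → ℝ))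
    (x : ℝ → Fin n → ℝ)
    -- `x` solves the boundary-value problem with switch point `s`
    (hx : IsSwitchSol T s I E bI bE F₀ F₁ x)
    -- Dynamics Smoothness on the two tubes
    (hds₀ : DynSmooth n F₀ DF₀ x 0 (s + ρ) ρ L)
    (hds₁ : DynSmooth n F₁ DF₁ x (s - ρ) T ρ L)
    -- `F₁` is twice continuously differentiable in `t` along the trajectory `x` on `[s,s+ρ]`
    (hxtraj : ContDiffOn ℝ 1 (fun t => F₁ (x t) t) (Icc s (s + ρ))) :
    ∃ C : ℝ, ∃ η > (0 : ℝ), ∀ Δs : ℝ, 0 < Δs → Δs ≤ ρ → Δs ≤ η →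
      ∀ xp : ℝ → Fin n → ℝ,
      -- `xp = x⁺` solves the boundary-value problem with switch point `s + Δs` …
      IsSwitchSol T (s + Δs) I E bI bE F₀ F₁ xp →
      -- … with `θ := x⁺_J(0) - x_J(0)` of size `O(Δs)`, `‖x⁺ - x‖ ≤ κ Δs`,
      -- remaining in the tubes
      ‖(fun j : {j // j ∈ Iᶜ} => xp 0 j.1 - x 0 j.1)‖ ≤ c₀ * Δs →
      (∀ t ∈ Icc 0 T, ‖xp t - x t‖ ≤ κ * Δs) →
      (∀ t ∈ Icc 0 T, ‖xp t - x t‖ ≤ ρ) →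
      -- `F₀` is twice continuously differentiable in `t` along `x⁺` on `[s,s+ρ]`
      ContDiffOn ℝ 1 (fun t => F₀ (xp t) t) (Icc s (s + ρ)) →
      ∀ Z : ℝ → Fin n → ℝ,
      -- `Z` solves the piecewise linearized system with jump update, with
      -- `Z_I(0) = 0` and `Z_J(0) = θ = x⁺_J(0) - x_J(0)`
      ContinuousOn Z (Icc 0 s) →
      (∀ t ∈ Ico 0 s, HasDerivWithinAt Z (DF₀ (x t) t (Z t)) (Icc 0 s) t) →
      (∀ i ∈ I, Z 0 i = 0) →
      (∀ j : {j // j ∈ Iᶜ}, Z 0 j.1 = xp 0 j.1 - x 0 j.1) →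
      Z (s + Δs) = Z s + Δs • (F₀ (x s) s - F₁ (x s) s) →
      ContinuousOn Z (Icc (s + Δs) T) →
      (∀ t ∈ Ioc (s + Δs) T, HasDerivWithinAt Z (DF₁ (x t) t (Z t)) (Icc (s + Δs) T) t) →
      -- conclusion: `‖x⁺(t) - x(t) - Z(t)‖ ≤ C Δs²` on `[0,s] ∪ [s+Δs, T]`
      ∀ t ∈ Icc 0 s ∪ Icc (s + Δs) T, ‖xp t - x t - Z t‖ ≤ C * Δs ^ 2 := by
  obtain ⟨hs0, hsT⟩ := hs
  obtain ⟨M₀, hM₀, hDF₀⟩ := hds₀.exists_bound_along (Icc_subset_Icc le_rfl (by linarith))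
    (hx.1.mono (Icc_subset_Icc le_rfl hsT.le)) hρ.le
  obtain ⟨M₁, hM₁, hDF₁⟩ := hds₁.exists_bound_along (Icc_subset_Icc (by linarith) le_rfl)
    (hx.1.mono (Icc_subset_Icc hs0.le le_rfl)) hρ.le
  obtain ⟨Cj, η, hη, hηT, hjump⟩ :=
    hx.exists_jump_bound (κ := κ) ⟨hs0, hsT⟩ hρ hds₀.contDiffOn hxtraj
  set C₀ := |L| * κ ^ 2 * s * exp (M₀ * s)
  set C₁ := (C₀ + Cj + |L| * κ ^ 2 * T) * exp (M₁ * T)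
  refine ⟨max C₀ C₁, η, hη, fun Δs hΔ _ hΔη xp hxp _ hκ hρ _ Z hZ₀ hZ₀' hZI hZJ hZjump hZ₁
    hZ₁' => ?_⟩
  have hΔT : s + Δs ≤ T := by linarith
  have phase₀ : ∀ t ∈ Icc 0 s, ‖xp t - x t - Z t‖ ≤ C₀ * Δs ^ 2 := fun t ht =>
    (hxp.norm_sub_sub_le_before_switch hx (by linarith) hΔT hds₀ (by linarith) hM₀ hDF₀ hZ₀ hZ₀'
      hZI hZJ hρ hκ t ht).trans_eq (by ring)
  have hjump' : ‖xp (s + Δs) - x (s + Δs) - Z (s + Δs)‖ ≤ (C₀ + Cj) * Δs ^ 2 :=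
    calc ‖xp (s + Δs) - x (s + Δs) - Z (s + Δs)‖
        = ‖(xp s - x s - Z s) + (xp (s + Δs) - x (s + Δs) - (xp s - x s)
            - Δs • (F₀ (x s) s - F₁ (x s) s))‖ := by rw [hZjump]; congr 1; abel
      _ ≤ C₀ * Δs ^ 2 + Cj * Δs ^ 2 := norm_add_le_of_le (phase₀ s ⟨hs0.le, le_rfl⟩)
          (hjump Δs hΔ hΔη xp hxp hκ)
      _ = (C₀ + Cj) * Δs ^ 2 := by ring
  have phase₁ : ∀ t ∈ Icc (s + Δs) T, ‖xp t - x t - Z t‖ ≤ C₁ * Δs ^ 2 := fun t ht =>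
    (hxp.norm_sub_sub_le_after_switch hx hs0.le (by linarith) hds₁ (by linarith) hM₁
      (fun t ht => hDF₁ t ⟨by linarith [ht.1], ht.2⟩) hZ₁ hZ₁' hρ hκ hjump' t ht).trans_eq
      (by ring)
  rintro t (ht | ht)
  · exact (phase₀ t ht).trans (by gcongr; exact le_max_left _ _)
  · exact (phase₁ t ht).trans (by gcongr; exact le_max_right _ _)

/-- the piecewise linearized system with jump update gives an
`O(Δs²)` approximation of `x⁺ - x`. -/
theorem switch_point_linearization_quadratic_error
    {n : ℕ} (hn : 0 < n) (T s ρ L c₀ κ : ℝ) (hT : 0 < T) (hs : s ∈ Ioo 0 T) (hρ : 0 < ρ)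
    (I E : Finset (Fin n)) (hcard : I.card + E.card = n)
    (bI bE : Fin n → ℝ)
    (F₀ F₁ : (Fin n → ℝ) → ℝ → Fin n → ℝ)
    (DF₀ DF₁ : (Fin n → ℝ) → ℝ → (Fin n → ℝ) →L[ℝ] (Fin n → ℝ))
    (x : ℝ → Fin n → ℝ)
    -- `x` solves the boundary-value problem with switch point `s`
    (hx : IsSwitchSol T s I E bI bE F₀ F₁ x)
    -- Dynamics Smoothness on the two tubes
    (hds₀ : DynSmooth n F₀ DF₀ x 0 (s + ρ) ρ L)
    (hds₁ : DynSmooth n F₁ DF₁ x (s - ρ) T ρ L)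
    -- `F₁` is twice continuously differentiable in `t` along the trajectory `x` on `[s,s+ρ]`
    (hxtraj : ContDiffOn ℝ 1 (fun t => F₁ (x t) t) (Icc s (s + ρ))) :
    ∃ C : ℝ, ∃ η > (0 : ℝ), ∀ Δs : ℝ, 0 < Δs → Δs ≤ ρ → Δs ≤ η →
      ∀ xp : ℝ → Fin n → ℝ,
      -- `xp = x⁺` solves the boundary-value problem with switch point `s + Δs` …
      IsSwitchSol T (s + Δs) I E bI bE F₀ F₁ xp →
      -- … with `θ := x⁺_J(0) - x_J(0)` of size `O(Δs)`, `‖x⁺ - x‖ ≤ κ Δs`,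
      -- remaining in the tubes
      ‖(fun j : {j // j ∈ Iᶜ} => xp 0 j.1 - x 0 j.1)‖ ≤ c₀ * Δs →
      (∀ t ∈ Icc 0 T, ‖xp t - x t‖ ≤ κ * Δs) →
      (∀ t ∈ Icc 0 T, ‖xp t - x t‖ ≤ ρ) →
      -- `F₀` is twice continuously differentiable in `t` along `x⁺` on `[s,s+ρ]`
      ContDiffOn ℝ 1 (fun t => F₀ (xp t) t) (Icc s (s + ρ)) →
      ∀ Z : ℝ → Fin n → ℝ,
      -- `Z` solves the piecewise linearized system with jump update, with
      -- `Z_I(0) = 0` and `Z_J(0) = θ = x⁺_J(0) - x_J(0)`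
      ContinuousOn Z (Icc 0 s) →
      (∀ t ∈ Ico 0 s, HasDerivWithinAt Z (DF₀ (x t) t (Z t)) (Icc 0 s) t) →
      (∀ i ∈ I, Z 0 i = 0) →
      (∀ j : {j // j ∈ Iᶜ}, Z 0 j.1 = xp 0 j.1 - x 0 j.1) →
      Z (s + Δs) = Z s + Δs • (F₀ (x s) s - F₁ (x s) s) →
      ContinuousOn Z (Icc (s + Δs) T) →
      (∀ t ∈ Ioc (s + Δs) T, HasDerivWithinAt Z (DF₁ (x t) t (Z t)) (Icc (s + Δs) T) t) →
      -- conclusion: `‖x⁺(t) - x(t) - Z(t)‖ ≤ C Δs²` on `[0,s] ∪ [s+Δs, T]`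
      ∀ t ∈ Icc 0 s ∪ Icc (s + Δs) T, ‖xp t - x t - Z t‖ ≤ C * Δs ^ 2 :=
  switch_point_linearization_quadratic_error_general T s ρ L c₀ κ hs hρ I E bI bE F₀ F₁ DF₀ DF₁ x hx
    hds₀ hds₁ hxtraj
end
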